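/- arXiv:2509.01782 — 8 statements merged into one kernel-verified Lean document; each statement's English description precedes it below -/
import Mathlib

section
/- Let m > 1 be a real number and l a natural number with l < m − 1. Let ω be a complex number with Im ω > 0, write ω = |ω|e^{iθ} with θ ∈ (0, π), and set q_ω = |ω|^{1/m} e^{iθ/m} and μ = e^{iπ/m}. Then the integral L_{m,l}(ω) = ∫_{-∞}^{∞} k^l / (ω − sign(k)·|k|^m) dk converges absolutely and equals (2πi/m) · q_ω^{l+1−m} / ((−1)^l μ^{l+1} − 1). -/
open MeasureTheory Complex Filter Topology

/-- `L_{m,l}(ω) = ∫_{-∞}^{∞} k^l / (ω − sign(k)·|k|^m) dk` for the antisymmetric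
dispersion `ε(k) = sign(k)|k|^m`. -/
noncomputable def Lint (m : ℝ) (l : ℕ) (ω : ℂ) : ℂ :=
  ∫ k : ℝ, (k : ℂ) ^ l / (ω - ((Real.sign k * |k| ^ m : ℝ) : ℂ))

/-! On each half-line the integrand is `±k^l / (k^m + a)` with `a = ∓ω` off the cut `(-∞, 0]`.
For `a = t > 0` the substitutions `y = x^m`, `y = t u`, `u = x / (1 - x)` turn
`∫₀^∞ x^l / (x^m + t) dx` into the Beta integral `B(s, 1 - s) = π / sin (π s)`, `s = (l + 1) / m`,
so it equals `π t^(s-1) / (m sin (π s))`. Both sides are holomorphic in `a` on the slit plane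
(differentiate under the integral sign, dominated by a multiple of `x^l / (1 + x^m)`), so the
formula persists to `a = ω` and `a = -ω`, of arguments `θ` and `θ - π`. The two contributions
combine through `((-1)^l + e^{-iπs}) ((-1)^l e^{iπs} - 1) = 2i sin (π s)`. -/

open Set
open scoped Real

theorem Complex.betaIntegral_one_sub {s : ℂ} (h0 : 0 < s.re) (h1 : s.re < 1) :
    betaIntegral s (1 - s) = π / sin (π * s) := by
  have h := Gamma_mul_Gamma_eq_betaIntegral h0 (by simpa using h1 : 0 < (1 - s).re)
  rwa [Gamma_mul_Gamma_one_sub, add_sub_cancel, Gamma_one, one_mul, eq_comm] at h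

theorem integral_Ioo_rpow_mul_one_sub_rpow_neg {s : ℝ} (h0 : 0 < s) (h1 : s < 1) :
    ∫ x in Ioo (0 : ℝ) 1, x ^ (s - 1) * (1 - x) ^ (-s) = π / Real.sin (π * s) := by
  apply ofReal_injective
  rw [← integral_complex_ofReal, ← integral_Ioc_eq_integral_Ioo,
    ← intervalIntegral.integral_of_le zero_le_one]
  push_cast
  rw [← betaIntegral_one_sub (by simpa using h0) (by simpa using h1), betaIntegral]
  refine intervalIntegral.integral_congr fun x hx => ?_
  rw [uIcc_of_le zero_le_one] at hx
  simp only [ofReal_cpow hx.1, ofReal_cpow (sub_nonneg.2 hx.2)]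
  push_cast
  ring_nf

theorem integral_Ioi_rpow_div_one_add {s : ℝ} (h0 : 0 < s) (h1 : s < 1) :
    ∫ u in Ioi (0 : ℝ), u ^ (s - 1) / (1 + u) = π / Real.sin (π * s) := by
  set φ : ℝ → ℝ := fun x => x / (1 - x)
  have himage : φ '' Ioo 0 1 = Ioi 0 := by
    ext u
    refine ⟨fun ⟨x, ⟨hx0, hx1⟩, hu⟩ => hu ▸ div_pos hx0 (sub_pos.2 hx1), fun hu => ?_⟩
    have hu : (0 : ℝ) < u := hu
    refine ⟨u / (1 + u), ⟨by positivity, (div_lt_one (by positivity)).2 (by linarith)⟩, ?_⟩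
    simp only [φ]
    field_simp
    ring
  have hderiv : ∀ x ∈ Ioo (0 : ℝ) 1, HasDerivWithinAt φ (((1 - x) ^ 2)⁻¹) (Ioo 0 1) x := by
    intro x hx
    have hne : 1 - x ≠ 0 := (sub_pos.2 hx.2).ne'
    exact (((hasDerivAt_id x).div ((hasDerivAt_id x).const_sub 1) hne).congr_deriv
      (by simp only [id]; ring)).hasDerivWithinAt
  have hinj : InjOn φ (Ioo 0 1) := by
    intro x hx y hy hxy
    have := (sub_pos.2 hx.2).ne'
    have := (sub_pos.2 hy.2).ne'
    simp only [φ] at hxy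
    field_simp at hxy
    linarith
  rw [← himage, integral_image_eq_integral_abs_deriv_smul measurableSet_Ioo hderiv hinj,
    ← integral_Ioo_rpow_mul_one_sub_rpow_neg h0 h1]
  refine setIntegral_congr_fun measurableSet_Ioo fun x ⟨hx0, hx1⟩ => ?_
  have h1x : 0 < 1 - x := sub_pos.2 hx1
  have hφ : 1 + φ x = (1 - x)⁻¹ := by
    simp only [φ]
    field_simp
    ring
  rw [smul_eq_mul, hφ, abs_of_pos (by positivity), Real.div_rpow hx0.le h1x.le,
    Real.rpow_sub_one h1x.ne', Real.rpow_neg h1x.le]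
  field_simp

theorem integral_Ioi_rpow_div_add {s t : ℝ} (h0 : 0 < s) (h1 : s < 1) (ht : 0 < t) :
    ∫ u in Ioi (0 : ℝ), u ^ (s - 1) / (u + t) =
      π / Real.sin (π * s) * t ^ (s - 1) := by
  have hscale := integral_comp_mul_left_Ioi (fun u : ℝ => u ^ (s - 1) / (u + t)) 0 ht
  rw [mul_zero, smul_eq_mul] at hscale
  calc ∫ u in Ioi (0 : ℝ), u ^ (s - 1) / (u + t)
      = t * ∫ x in Ioi (0 : ℝ), (t * x) ^ (s - 1) / (t * x + t) := by
        rw [hscale, mul_inv_cancel_left₀ ht.ne']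
    _ = t * ∫ x in Ioi (0 : ℝ), t ^ (s - 1) * t⁻¹ * (x ^ (s - 1) / (1 + x)) := by
        congr 1
        refine setIntegral_congr_fun measurableSet_Ioi fun x (hx : 0 < x) => ?_
        rw [Real.mul_rpow ht.le hx.le]
        field_simp
        ring
    _ = π / Real.sin (π * s) * t ^ (s - 1) := by
        rw [integral_const_mul, integral_Ioi_rpow_div_one_add h0 h1]
        field_simp

theorem integral_Ioi_rpow_div_rpow_add {p m t : ℝ} (hp : -1 < p) (hpm : p < m - 1) (ht : 0 < t) :
    ∫ x in Ioi (0 : ℝ), x ^ p / (x ^ m + t) =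
      π / (m * Real.sin (π * ((p + 1) / m))) * t ^ ((p + 1) / m - 1) := by
  have hm : 0 < m := by linarith
  set s := (p + 1) / m
  have hs0 : 0 < s := div_pos (by linarith) hm
  have hs1 : s < 1 := (div_lt_one hm).2 (by linarith)
  calc ∫ x in Ioi (0 : ℝ), x ^ p / (x ^ m + t)
      = ∫ x in Ioi (0 : ℝ), (m * x ^ (m - 1)) • (m⁻¹ * ((x ^ m) ^ (s - 1) / (x ^ m + t))) := by
        refine setIntegral_congr_fun measurableSet_Ioi fun x (hx : 0 < x) => ?_
        have hpow : x ^ (m - 1) * (x ^ m) ^ (s - 1) = x ^ p := by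
          rw [← Real.rpow_mul hx.le, ← Real.rpow_add hx]
          congr 1
          simp only [s]
          field_simp
          ring
        rw [smul_eq_mul, ← hpow]
        field_simp
    _ = ∫ y in Ioi (0 : ℝ), m⁻¹ * (y ^ (s - 1) / (y + t)) :=
        integral_comp_rpow_Ioi_of_pos (g := fun y => m⁻¹ * (y ^ (s - 1) / (y + t))) hm
    _ = π / (m * Real.sin (π * s)) * t ^ (s - 1) := by
        rw [integral_const_mul, integral_Ioi_rpow_div_add hs0 hs1 ht]
        field_simp

theorem Complex.cos_arg_div_two_mul_le_norm_ofReal_add (a : ℂ) (r : ℝ) :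
    Real.cos (a.arg / 2) * (r + ‖a‖) ≤ ‖(r : ℂ) + a‖ := by
  set φ := a.arg / 2
  set u := exp (((-φ : ℝ) : ℂ) * I)
  have hre : (u * (r + a)).re = Real.cos φ * (r + ‖a‖) := by
    have hcos : Real.cos φ = Real.cos (a.arg) * Real.cos φ + Real.sin (a.arg) * Real.sin φ := by
      rw [← Real.cos_sub]; congr 1; simp only [φ]; ring
    simp only [u, mul_re, exp_ofReal_mul_I_re, exp_ofReal_mul_I_im, add_re, add_im, ofReal_re,
      ofReal_im, Real.cos_neg, Real.sin_neg, ← norm_mul_cos_arg a, ← norm_mul_sin_arg a]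
    linear_combination (-‖a‖) * hcos
  calc Real.cos φ * (r + ‖a‖) = (u * (r + a)).re := hre.symm
    _ ≤ ‖u * (r + a)‖ := re_le_norm _
    _ = ‖(r : ℂ) + a‖ := by rw [norm_mul, norm_exp_ofReal_mul_I, one_mul]

theorem Complex.exists_pos_mul_one_add_le_norm_ofReal_add {a₀ : ℂ} (ha₀ : a₀ ∈ slitPlane) :
    ∃ c > 0, ∀ a ∈ Metric.ball a₀ c, ∀ r : ℝ, 0 ≤ r → c * (1 + r) ≤ ‖(r : ℂ) + a‖ := by
  have hκ : 0 < Real.cos (a₀.arg / 2) := by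
    have := neg_pi_lt_arg a₀
    have := lt_of_le_of_ne (arg_le_pi a₀) (slitPlane_arg_ne_pi ha₀)
    exact Real.cos_pos_of_mem_Ioo ⟨by linarith, by linarith⟩
  have hnorm : 0 < ‖a₀‖ := norm_pos_iff.2 (slitPlane_ne_zero ha₀)
  set c := Real.cos (a₀.arg / 2) * min 1 ‖a₀‖ / 2
  have hc : 0 < c := by positivity
  refine ⟨c, hc, fun a ha r hr => ?_⟩
  have hmin : min 1 ‖a₀‖ * (1 + r) ≤ r + ‖a₀‖ := by
    nlinarith [min_le_left 1 ‖a₀‖, min_le_right 1 ‖a₀‖]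
  have hdist : ‖a - a₀‖ < c := by rwa [← dist_eq_norm]
  have htwo : 2 * c * (1 + r) = Real.cos (a₀.arg / 2) * (min 1 ‖a₀‖ * (1 + r)) := by ring
  have htri := norm_add_le ((r : ℂ) + a) (a₀ - a)
  rw [add_add_sub_cancel, norm_sub_rev] at htri
  calc c * (1 + r) ≤ Real.cos (a₀.arg / 2) * (r + ‖a₀‖) - c := by
        nlinarith [mul_le_mul_of_nonneg_left hmin hκ.le]
    _ ≤ ‖(r : ℂ) + a₀‖ - ‖a - a₀‖ := by
        linarith [cos_arg_div_two_mul_le_norm_ofReal_add a₀ r]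
    _ ≤ ‖(r : ℂ) + a‖ := by linarith

section HalfLineIntegral

variable {m : ℝ} {l : ℕ}

theorem integrableOn_Ioi_pow_div_one_add_rpow (hl : (l : ℝ) < m - 1) :
    IntegrableOn (fun x : ℝ => x ^ l / (1 + x ^ m)) (Ioi 0) := by
  have hm : 0 ≤ m := by linarith [l.cast_nonneg (α := ℝ)]
  have hcont : ContinuousOn (fun x : ℝ => x ^ l / (1 + x ^ m)) (Ici 0) :=
    (continuous_pow l).continuousOn.div
      (continuousOn_const.add (Real.continuous_rpow_const hm).continuousOn)
      fun x hx => by have := Real.rpow_nonneg hx m; positivity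
  rw [← Ioc_union_Ioi_eq_Ioi zero_le_one]
  refine IntegrableOn.union ?_ ?_
  · exact ((hcont.mono Icc_subset_Ici_self).integrableOn_compact isCompact_Icc).mono_set
      Ioc_subset_Icc_self
  · refine (integrableOn_Ioi_rpow_of_lt (a := (l : ℝ) - m) (by linarith) one_pos).mono'
      ((hcont.mono fun x (hx : 1 < x) => zero_le_one.trans hx.le).aestronglyMeasurable
        measurableSet_Ioi) ?_
    filter_upwards [ae_restrict_mem measurableSet_Ioi] with x (hx : 1 < x)
    have hx0 : 0 < x := one_pos.trans hx
    have hxm : 0 < x ^ m := Real.rpow_pos_of_pos hx0 m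
    rw [Real.norm_of_nonneg (by positivity), Real.rpow_sub hx0, Real.rpow_natCast]
    exact div_le_div_of_nonneg_left (by positivity) hxm (by linarith)

theorem norm_pow_div_rpow_add_pow_le {a : ℂ} {c x : ℝ} (hc : 0 < c) (hx : 0 ≤ x)
    (hbound : c * (1 + x ^ m) ≤ ‖((x ^ m : ℝ) : ℂ) + a‖) (n : ℕ) :
    ‖(x : ℂ) ^ l / (((x ^ m : ℝ) : ℂ) + a) ^ (n + 1)‖ ≤
      (c ^ (n + 1))⁻¹ * (x ^ l / (1 + x ^ m)) := by
  have h1 : 1 ≤ 1 + x ^ m := by linarith [Real.rpow_nonneg hx m]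
  rw [norm_div, norm_pow, norm_pow, norm_real, Real.norm_of_nonneg hx, inv_mul_eq_div, div_div]
  refine div_le_div_of_nonneg_left (by positivity) (by positivity) ?_
  calc (1 + x ^ m) * c ^ (n + 1) ≤ (1 + x ^ m) ^ (n + 1) * c ^ (n + 1) := by
        gcongr; exact le_self_pow₀ h1 n.succ_ne_zero
    _ = (c * (1 + x ^ m)) ^ (n + 1) := by rw [mul_pow, mul_comm]
    _ ≤ ‖((x ^ m : ℝ) : ℂ) + a‖ ^ (n + 1) := by gcongr

theorem integrableOn_Ioi_pow_div_rpow_add (hl : (l : ℝ) < m - 1) {a : ℂ} (ha : a ∈ slitPlane) :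
    IntegrableOn (fun x : ℝ => (x : ℂ) ^ l / (((x ^ m : ℝ) : ℂ) + a)) (Ioi 0) := by
  obtain ⟨c, hc, hbound⟩ := exists_pos_mul_one_add_le_norm_ofReal_add ha
  refine ((integrableOn_Ioi_pow_div_one_add_rpow hl).const_mul (c ^ 1)⁻¹).mono'
    (by fun_prop : Measurable _).aestronglyMeasurable ?_
  filter_upwards [ae_restrict_mem measurableSet_Ioi] with x (hx : 0 < x)
  simpa using norm_pow_div_rpow_add_pow_le hc hx.le
    (hbound a (Metric.mem_ball_self hc) _ (Real.rpow_nonneg hx.le m)) 0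

theorem differentiableOn_integral_Ioi_pow_div_rpow_add (hl : (l : ℝ) < m - 1) :
    DifferentiableOn ℂ
      (fun a : ℂ => ∫ x in Ioi (0 : ℝ), (x : ℂ) ^ l / (((x ^ m : ℝ) : ℂ) + a)) slitPlane := by
  intro a₀ ha₀
  obtain ⟨c, hc, hbound⟩ := exists_pos_mul_one_add_le_norm_ofReal_add ha₀
  refine (hasDerivAt_integral_of_dominated_loc_of_deriv_le (Metric.ball_mem_nhds a₀ hc)
    (F := fun a (x : ℝ) => (x : ℂ) ^ l / (((x ^ m : ℝ) : ℂ) + a))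
    (F' := fun a (x : ℝ) => -((x : ℂ) ^ l / (((x ^ m : ℝ) : ℂ) + a) ^ 2))
    (bound := fun x => (c ^ 2)⁻¹ * (x ^ l / (1 + x ^ m)))
    (Eventually.of_forall fun a => (by fun_prop : Measurable _).aestronglyMeasurable)
    (integrableOn_Ioi_pow_div_rpow_add hl ha₀) (by fun_prop : Measurable _).aestronglyMeasurable
    ?_ ((integrableOn_Ioi_pow_div_one_add_rpow hl).const_mul _)
    ?_).2.differentiableAt.differentiableWithinAt
  · filter_upwards [ae_restrict_mem measurableSet_Ioi] with x (hx : 0 < x) a ha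
    rw [norm_neg]
    exact norm_pow_div_rpow_add_pow_le hc hx.le (hbound a ha _ (Real.rpow_nonneg hx.le m)) 1
  · filter_upwards [ae_restrict_mem measurableSet_Ioi] with x (hx : 0 < x) a ha
    have hne : ((x ^ m : ℝ) : ℂ) + a ≠ 0 := norm_pos_iff.1 <|
      lt_of_lt_of_le (by positivity) (hbound a ha _ (Real.rpow_nonneg hx.le m))
    exact ((hasDerivAt_const a ((x : ℂ) ^ l)).div ((hasDerivAt_id a).const_add _) hne).congr_deriv
      (by simp only [id]; ring)

theorem integral_Ioi_pow_div_rpow_add_eq_cpow (hl : (l : ℝ) < m - 1) {a : ℂ}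
    (ha : a ∈ slitPlane) :
    ∫ x in Ioi (0 : ℝ), (x : ℂ) ^ l / (((x ^ m : ℝ) : ℂ) + a) =
      ((π / (m * Real.sin (π * ((l + 1) / m))) : ℝ) : ℂ) *
        a ^ ((((l : ℝ) + 1) / m - 1 : ℝ) : ℂ) := by
  set C : ℂ := ((π / (m * Real.sin (π * ((l + 1) / m))) : ℝ) : ℂ)
  set α : ℝ := ((l : ℝ) + 1) / m - 1
  have hreal : ∀ t : ℝ, 0 < t →
      ∫ x in Ioi (0 : ℝ), (x : ℂ) ^ l / (((x ^ m : ℝ) : ℂ) + t) = C * (t : ℂ) ^ (α : ℂ) := by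
    intro t ht
    rw [← ofReal_cpow ht.le, ← ofReal_mul,
      ← integral_Ioi_rpow_div_rpow_add (by linarith [l.cast_nonneg (α := ℝ)]) hl ht,
      ← integral_complex_ofReal]
    refine setIntegral_congr_fun measurableSet_Ioi fun x _ => ?_
    push_cast [Real.rpow_natCast]
    rfl
  have hfreq : ∃ᶠ z in 𝓝[≠] (1 : ℂ),
      ∫ x in Ioi (0 : ℝ), (x : ℂ) ^ l / (((x ^ m : ℝ) : ℂ) + z) = C * z ^ (α : ℂ) := by
    have hmaps : Tendsto ((↑) : ℝ → ℂ) (𝓝[≠] 1) (𝓝[≠] 1) := by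
      simpa using continuous_ofReal.continuousWithinAt.tendsto_nhdsWithin
        (x := 1) (t := {1}ᶜ) fun x hx => by simpa using hx
    refine hmaps.frequently (Eventually.frequently ?_)
    filter_upwards [eventually_nhdsWithin_of_eventually_nhds (eventually_gt_nhds one_pos)]
      with t ht using hreal t ht
  have hcpow : DifferentiableOn ℂ (fun z : ℂ => C * z ^ (α : ℂ)) slitPlane :=
    fun z hz => (differentiableAt_id.cpow_const hz).differentiableWithinAt.const_mul C
  exact ((differentiableOn_integral_Ioi_pow_div_rpow_add hl).analyticOnNhd
    isOpen_slitPlane).eqOn_of_preconnected_of_frequently_eq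
    (hcpow.analyticOnNhd isOpen_slitPlane)
    (starConvex_one_slitPlane.isPathConnected one_mem_slitPlane).isConnected.isPreconnected
    one_mem_slitPlane hfreq ha

end HalfLineIntegral

theorem integrable_and_integral_eq_integral_Ioi_comp_neg_add {E : Type*} [NormedAddCommGroup E]
    [NormedSpace ℝ E] {f : ℝ → E} (hpos : IntegrableOn f (Ioi 0))
    (hneg : IntegrableOn (fun x => f (-x)) (Ioi 0)) :
    Integrable f ∧ ∫ x, f x = (∫ x in Ioi 0, f (-x)) + ∫ x in Ioi 0, f x := by
  have hIic : IntegrableOn f (Iic 0) := by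
    let e : MeasurableEmbedding fun x : ℝ => -x := (Homeomorph.neg ℝ).measurableEmbedding
    rw [← Measure.map_neg_eq_self (volume : Measure ℝ), e.integrableOn_map_iff]
    simpa [Function.comp_def, integrableOn_Ici_iff_integrableOn_Ioi] using hneg
  refine ⟨by simpa [← integrableOn_univ] using hIic.union hpos, ?_⟩
  rw [← intervalIntegral.integral_Iic_add_Ioi hIic hpos, integral_comp_neg_Ioi, neg_zero]

section Lint

variable {m : ℝ} {l : ℕ} {ω : ℂ}

theorem eqOn_Lint_integrand_Ioi :
    EqOn (fun k : ℝ => (k : ℂ) ^ l / (ω - ((Real.sign k * |k| ^ m : ℝ) : ℂ)))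
      (fun k => -((k : ℂ) ^ l / (((k ^ m : ℝ) : ℂ) + -ω))) (Ioi 0) := fun k (hk : 0 < k) => by
  simp only
  rw [Real.sign_of_pos hk, abs_of_pos hk, one_mul, ← div_neg, neg_add, neg_neg, add_comm]
  rfl

theorem eqOn_Lint_integrand_comp_neg_Ioi :
    EqOn (fun k : ℝ => ((-k : ℝ) : ℂ) ^ l / (ω - ((Real.sign (-k) * |-k| ^ m : ℝ) : ℂ)))
      (fun k => (-1) ^ l * ((k : ℂ) ^ l / (((k ^ m : ℝ) : ℂ) + ω))) (Ioi 0) :=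
  fun k (hk : 0 < k) => by
  simp only
  rw [Real.sign_of_neg (neg_lt_zero.2 hk), abs_neg, abs_of_pos hk, ofReal_neg, neg_pow,
    mul_div_assoc]
  push_cast
  ring_nf

theorem integrable_and_Lint_eq_of_im_ne_zero (hl : (l : ℝ) < m - 1) (hω : ω.im ≠ 0) :
    Integrable (fun k : ℝ => (k : ℂ) ^ l / (ω - ((Real.sign k * |k| ^ m : ℝ) : ℂ))) ∧
      Lint m l ω = ((π / (m * Real.sin (π * ((l + 1) / m))) : ℝ) : ℂ) *
        ((-1) ^ l * ω ^ ((((l : ℝ) + 1) / m - 1 : ℝ) : ℂ) -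
          (-ω) ^ ((((l : ℝ) + 1) / m - 1 : ℝ) : ℂ)) := by
  have hω₁ : ω ∈ slitPlane := Or.inr hω
  have hω₂ : -ω ∈ slitPlane := Or.inr (by simpa using hω)
  have hpos := eqOn_Lint_integrand_Ioi (m := m) (l := l) (ω := ω)
  have hneg := eqOn_Lint_integrand_comp_neg_Ioi (m := m) (l := l) (ω := ω)
  obtain ⟨hint, hsplit⟩ := integrable_and_integral_eq_integral_Ioi_comp_neg_add
    (((integrableOn_Ioi_pow_div_rpow_add hl hω₂).neg).congr_fun hpos.symm
      measurableSet_Ioi)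
    (IntegrableOn.congr_fun ((integrableOn_Ioi_pow_div_rpow_add hl hω₁).const_mul _)
      hneg.symm measurableSet_Ioi)
  refine ⟨hint, ?_⟩
  rw [Lint, hsplit, setIntegral_congr_fun measurableSet_Ioi hpos,
    setIntegral_congr_fun measurableSet_Ioi hneg, integral_neg, integral_const_mul,
    integral_Ioi_pow_div_rpow_add_eq_cpow hl hω₁, integral_Ioi_pow_div_rpow_add_eq_cpow hl hω₂]
  ring

end Lint

theorem Complex.cpow_ofReal_eq_mul_exp (z : ℂ) (y : ℝ) :
    z ^ (y : ℂ) = ((‖z‖ ^ y : ℝ) : ℂ) * exp (((y * z.arg : ℝ) : ℂ) * I) := by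
  rw [cpow_ofReal, exp_mul_I, ← ofReal_cos, ← ofReal_sin, mul_comm y]

theorem pi_div_sin_mul_neg_one_pow_add_exp_neg_mul {x : ℝ} (hx : Real.sin x ≠ 0) (n : ℕ) :
    ((π / Real.sin x : ℝ) : ℂ) * ((-1) ^ n + exp (-((x : ℂ) * I))) *
      ((-1) ^ n * exp ((x : ℂ) * I) - 1) = 2 * π * I := by
  have hsq : ((-1 : ℂ) ^ n) ^ 2 = 1 := by rw [← pow_mul, mul_comm, pow_mul]; simp
  have hinv : exp ((x : ℂ) * I) * exp (-((x : ℂ) * I)) = 1 := by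
    rw [← exp_add, add_neg_cancel, exp_zero]
  have hE := exp_mul_I (x : ℂ)
  have hE' : exp (-((x : ℂ) * I)) = cos x - sin x * I := by
    rw [← neg_mul, exp_mul_I, cos_neg, sin_neg]; ring
  have hsin : (Real.sin x : ℂ) ≠ 0 := ofReal_ne_zero.2 hx
  have hprod : ((-1) ^ n + exp (-((x : ℂ) * I))) * ((-1) ^ n * exp ((x : ℂ) * I) - 1) =
      2 * sin x * I := by
    linear_combination exp ((x : ℂ) * I) * hsq + (-1) ^ n * hinv + hE - hE'
  rw [mul_assoc, hprod, ofReal_div, ofReal_sin]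
  rw [ofReal_sin] at hsin
  field_simp

theorem neg_one_pow_mul_cpow_sub_neg_cpow_of_im_pos {ω : ℂ} (him : 0 < ω.im) (s : ℝ) (n : ℕ) :
    (-1) ^ n * ω ^ ((s - 1 : ℝ) : ℂ) - (-ω) ^ ((s - 1 : ℝ) : ℂ) =
      ((‖ω‖ ^ (s - 1) : ℝ) : ℂ) * exp ((((s - 1) * ω.arg : ℝ) : ℂ) * I) *
        ((-1) ^ n + exp (-(((π * s : ℝ) : ℂ) * I))) := by
  have hexp : exp ((((s - 1) * (ω.arg - π) : ℝ) : ℂ) * I) =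
      -(exp ((((s - 1) * ω.arg : ℝ) : ℂ) * I) * exp (-(((π * s : ℝ) : ℂ) * I))) := by
    rw [← exp_add, show (((s - 1) * (ω.arg - π) : ℝ) : ℂ) * I =
      (((s - 1) * ω.arg : ℝ) : ℂ) * I + -(((π * s : ℝ) : ℂ) * I) + π * I by
        push_cast; ring, exp_add _ (π * I), exp_pi_mul_I]
    ring
  rw [cpow_ofReal_eq_mul_exp, cpow_ofReal_eq_mul_exp, arg_neg_eq_arg_sub_pi_of_im_pos him,
    norm_neg, hexp]
  ring

theorem stmt0_general (m : ℝ) (l : ℕ) (hl : (l : ℝ) < m - 1)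
    (ω : ℂ) (him : 0 < ω.im) (θ : ℝ) (hθ : θ ∈ Set.Ioo 0 Real.pi)
    (hpolar : ω = (‖ω‖ : ℂ) * Complex.exp ((θ : ℂ) * Complex.I)) :
    Integrable (fun k : ℝ => (k : ℂ) ^ l / (ω - ((Real.sign k * |k| ^ m : ℝ) : ℂ))) ∧
      Lint m l ω =
        (2 * (Real.pi : ℂ) * Complex.I / (m : ℂ)) *
            (((‖ω‖ ^ (((l : ℝ) + 1 - m) / m) : ℝ) : ℂ) *
              Complex.exp (((((l : ℝ) + 1 - m) / m * θ : ℝ) : ℂ) * Complex.I)) /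
          ((-1 : ℂ) ^ l * Complex.exp (((Real.pi / m : ℝ) : ℂ) * Complex.I) ^ (l + 1) - 1) := by
  obtain ⟨hint, hLint⟩ := integrable_and_Lint_eq_of_im_ne_zero hl him.ne'
  refine ⟨hint, ?_⟩
  have hm : 0 < m := by linarith [l.cast_nonneg (α := ℝ)]
  set s := ((l : ℝ) + 1) / m
  have hsin : Real.sin (π * s) ≠ 0 := (Real.sin_pos_of_pos_of_lt_pi (by positivity)
    (mul_lt_of_lt_one_right Real.pi_pos ((div_lt_one hm).2 (by linarith)))).ne'
  have harg : ω.arg = θ := by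
    rw [hpolar, arg_real_mul _ (norm_pos_iff.2 fun h => by simp [h] at him), exp_mul_I,
      arg_cos_add_sin_mul_I ⟨by linarith [hθ.1, Real.pi_pos], hθ.2.le⟩]
  have hμ : exp (((π / m : ℝ) : ℂ) * I) ^ (l + 1) = exp (((π * s : ℝ) : ℂ) * I) := by
    rw [← exp_nat_mul]; congr 1; simp only [s]; push_cast; field_simp
  rw [hLint, neg_one_pow_mul_cpow_sub_neg_cpow_of_im_pos him, harg, hμ,
    show ((l : ℝ) + 1 - m) / m = s - 1 by simp only [s]; field_simp]
  have key := pi_div_sin_mul_neg_one_pow_add_exp_neg_mul hsin l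
  have hne : (-1) ^ l * exp (((π * s : ℝ) : ℂ) * I) - 1 ≠ 0 := by
    intro h; rw [h, mul_zero] at key; simp at key
  rw [eq_div_iff hne, show ((π / (m * Real.sin (π * s)) : ℝ) : ℂ) =
    ((π / Real.sin (π * s) : ℝ) : ℂ) / m by push_cast; ring]
  linear_combination (((‖ω‖ ^ (s - 1) : ℝ) : ℂ) * exp ((((s - 1) * θ : ℝ) : ℂ) * I) / m) * key

/-- For `m > 1`, `l < m − 1`, and `ω` in the upper half-plane with polar form
`ω = |ω| e^{iθ}`, `θ ∈ (0, π)`, the integral `L_{m,l}(ω)` converges absolutely and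
equals `(2πi/m) · q_ω^{l+1−m} / ((−1)^l μ^{l+1} − 1)` where `q_ω = |ω|^{1/m} e^{iθ/m}`
and `μ = e^{iπ/m}` (so `q_ω^{l+1−m} = |ω|^{(l+1−m)/m} e^{iθ(l+1−m)/m}`). -/
theorem stmt0 (m : ℝ) (hm : 1 < m) (l : ℕ) (hl : (l : ℝ) < m - 1)
    (ω : ℂ) (him : 0 < ω.im) (θ : ℝ) (hθ : θ ∈ Set.Ioo 0 Real.pi)
    (hpolar : ω = (‖ω‖ : ℂ) * Complex.exp ((θ : ℂ) * Complex.I)) :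
    Integrable (fun k : ℝ => (k : ℂ) ^ l / (ω - ((Real.sign k * |k| ^ m : ℝ) : ℂ))) ∧
      Lint m l ω =
        (2 * (Real.pi : ℂ) * Complex.I / (m : ℂ)) *
            (((‖ω‖ ^ (((l : ℝ) + 1 - m) / m) : ℝ) : ℂ) *
              Complex.exp (((((l : ℝ) + 1 - m) / m * θ : ℝ) : ℂ) * Complex.I)) /
          ((-1 : ℂ) ^ l * Complex.exp (((Real.pi / m : ℝ) : ℂ) * Complex.I) ^ (l + 1) - 1) :=
  stmt0_general m l hl ω him θ hθ hpolar
end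

section
/- Let m ≥ 3 be an odd integer and let ω be a complex number with Im ω ≠ 0. Then the symmetric improper integral lim_{R→∞} ∫_{-R}^{R} k^{m−1} / (ω − sign(k)·|k|^m) dk exists and equals −iπ/m if Im ω > 0, and +iπ/m if Im ω < 0. -/
open MeasureTheory Complex Filter Topology

/-!
For odd `m` we have `sign k * |k| ^ m = k ^ m`, so the integrand is the derivative of
`-log (ω - k ^ m) / m` and the integral over `[-R, R]` equals
`(log (ω + R ^ m) - log (ω - R ^ m)) / m`. Factoring out `S = R ^ m > 0`, the `log S` terms cancel
and this becomes `(log (1 + ω / S) - log (ω / S - 1)) / m`. As `S → ∞`, `1 + ω / S → 1`, while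
`ω / S - 1 → -1` from the half-plane containing `ω`, where the principal logarithm tends to `πi`
or `-πi` according to the sign of `Im ω`.
-/

lemma Real.sign_mul_abs_pow_of_odd {m : ℕ} (hm : Odd m) (x : ℝ) :
    Real.sign x * |x| ^ m = x ^ m := by
  rcases lt_trichotomy x 0 with hx | rfl | hx
  · rw [Real.sign_of_neg hx, abs_of_neg hx, hm.neg_pow, neg_one_mul, neg_neg]
  · simp [zero_pow hm.pos.ne']
  · rw [Real.sign_of_pos hx, abs_of_pos hx, one_mul]

namespace Complex

lemma sub_ofReal_ne_zero {ω : ℂ} (hω : ω.im ≠ 0) (x : ℝ) : ω - x ≠ 0 := by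
  intro h
  exact hω (by simpa using congrArg im h)

lemma hasDerivAt_log_sub_ofReal_pow {ω : ℂ} (hω : ω.im ≠ 0) (m : ℕ) (x : ℝ) :
    HasDerivAt (fun y : ℝ => log (ω - (y : ℂ) ^ m))
      (-(m * (x : ℂ) ^ (m - 1)) / (ω - (x : ℂ) ^ m)) x := by
  have hpow : HasDerivAt (fun y : ℝ => ω - (y : ℂ) ^ m) (-(m * (x : ℂ) ^ (m - 1))) x :=
    ((hasDerivAt_pow m (x : ℂ)).comp_ofReal).const_sub ω
  have hslit : ω - (x : ℂ) ^ m ∈ slitPlane := by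
    rw [mem_slitPlane_iff, ← ofReal_pow, sub_im, ofReal_im, sub_zero]
    exact Or.inr hω
  simpa [div_eq_inv_mul, Function.comp_def] using (hasDerivAt_log hslit).comp x hpow

lemma intervalIntegral_pow_div_sub_pow {m : ℕ} (hm : Odd m) {ω : ℂ} (hω : ω.im ≠ 0) (R : ℝ) :
    ∫ k in (-R)..R, (k : ℂ) ^ (m - 1) / (ω - (k : ℂ) ^ m) =
      (m : ℂ)⁻¹ * (log (ω + (R ^ m : ℝ)) - log (ω - (R ^ m : ℝ))) := by
  have hden (k : ℝ) : ω - (k : ℂ) ^ m ≠ 0 := by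
    simpa using sub_ofReal_ne_zero hω (k ^ m)
  have hm0 : (m : ℂ) ≠ 0 := Nat.cast_ne_zero.mpr hm.pos.ne'
  have hderiv (k : ℝ) : HasDerivAt (fun y : ℝ => -(m : ℂ)⁻¹ * log (ω - (y : ℂ) ^ m))
      ((k : ℂ) ^ (m - 1) / (ω - (k : ℂ) ^ m)) k := by
    refine ((hasDerivAt_log_sub_ofReal_pow hω m k).const_mul (-(m : ℂ)⁻¹)).congr_deriv ?_
    rw [neg_div, neg_mul_neg, mul_div_assoc, inv_mul_cancel_left₀ hm0]
  have hcont : Continuous fun k : ℝ => (k : ℂ) ^ (m - 1) / (ω - (k : ℂ) ^ m) := by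
    fun_prop (disch := exact hden _)
  rw [intervalIntegral.integral_eq_sub_of_hasDerivAt (fun k _ => hderiv k)
    (hcont.intervalIntegrable _ _)]
  push_cast
  rw [hm.neg_pow, sub_neg_eq_add]
  ring

lemma log_add_ofReal_sub_log_sub_ofReal {ω : ℂ} (hω : ω.im ≠ 0) {S : ℝ} (hS : 0 < S) :
    log (ω + S) - log (ω - S) = log (1 + ω / S) - log (ω / S - 1) := by
  have hS' : (S : ℂ) ≠ 0 := ofReal_ne_zero.mpr hS.ne'
  have him : (ω / S).im ≠ 0 := by
    rw [div_ofReal_im]; exact div_ne_zero hω hS.ne'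
  have hplus : 1 + ω / S ≠ 0 := fun h => him (by simpa using congrArg im h)
  have hminus : ω / S - 1 ≠ 0 := fun h => him (by simpa using congrArg im h)
  rw [show ω + S = S * (1 + ω / S) by field_simp; ring, show ω - S = S * (ω / S - 1) by
    field_simp, log_ofReal_mul hS hplus, log_ofReal_mul hS hminus]
  ring

lemma tendsto_div_ofReal_atTop (ω : ℂ) : Tendsto (fun S : ℝ => ω / S) atTop (𝓝 0) := by
  simpa [div_eq_mul_inv] using
    ((continuous_ofReal.tendsto 0).comp tendsto_inv_atTop_zero).const_mul ω

lemma tendsto_log_add_ofReal_sub_log_sub_ofReal {ω L : ℂ} (hω : ω.im ≠ 0)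
    (hL : Tendsto (fun S : ℝ => log (ω / S - 1)) atTop (𝓝 L)) :
    Tendsto (fun S : ℝ => log (ω + S) - log (ω - S)) atTop (𝓝 (-L)) := by
  have hplus : Tendsto (fun S : ℝ => log (1 + ω / S)) atTop (𝓝 0) := by
    simpa [Function.comp_def] using (continuousAt_clog one_mem_slitPlane).tendsto.comp
      (by simpa using (tendsto_div_ofReal_atTop ω).const_add 1)
  refine (by simpa using hplus.sub hL : Tendsto _ _ (𝓝 (-L))).congr' ?_
  filter_upwards [eventually_gt_atTop 0] with S hS
  exact (log_add_ofReal_sub_log_sub_ofReal hω hS).symm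

lemma tendsto_div_ofReal_sub_one_nhdsWithin {ω : ℂ} {s : Set ℂ}
    (hs : ∀ S : ℝ, 0 < S → ω / S - 1 ∈ s) :
    Tendsto (fun S : ℝ => ω / S - 1) atTop (𝓝[s] (-1)) :=
  tendsto_nhdsWithin_iff.mpr ⟨by simpa using (tendsto_div_ofReal_atTop ω).sub_const 1,
    (eventually_gt_atTop 0).mono hs⟩

lemma tendsto_log_div_ofReal_sub_one_of_im_pos {ω : ℂ} (hω : 0 < ω.im) :
    Tendsto (fun S : ℝ => log (ω / S - 1)) atTop (𝓝 (Real.pi * I)) := by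
  have hs : ∀ S : ℝ, 0 < S → ω / S - 1 ∈ {z : ℂ | 0 ≤ z.im} := fun S hS => by
    simpa using (div_pos hω hS).le
  simpa [Function.comp_def] using
    (tendsto_log_nhdsWithin_im_nonneg_of_re_neg_of_im_zero (z := -1) (by simp) (by simp)).comp
      (tendsto_div_ofReal_sub_one_nhdsWithin hs)

lemma tendsto_log_div_ofReal_sub_one_of_im_neg {ω : ℂ} (hω : ω.im < 0) :
    Tendsto (fun S : ℝ => log (ω / S - 1)) atTop (𝓝 (-(Real.pi * I))) := by
  have hs : ∀ S : ℝ, 0 < S → ω / S - 1 ∈ {z : ℂ | z.im < 0} := fun S hS => by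
    simpa using div_neg_of_neg_of_pos hω hS
  simpa [Function.comp_def] using
    (tendsto_log_nhdsWithin_im_neg_of_re_neg_of_im_zero (z := -1) (by simp) (by simp)).comp
      (tendsto_div_ofReal_sub_one_nhdsWithin hs)

end Complex

theorem stmt2_general (m : ℕ) (hodd : Odd m) (ω : ℂ) (him : ω.im ≠ 0) :
    (0 < ω.im →
      Tendsto (fun R : ℝ => ∫ k in (-R)..R,
          (k : ℂ) ^ (m - 1) / (ω - ((Real.sign k * |k| ^ m : ℝ) : ℂ)))
        atTop (𝓝 (-(((Real.pi / m : ℝ) : ℂ) * Complex.I)))) ∧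
    (ω.im < 0 →
      Tendsto (fun R : ℝ => ∫ k in (-R)..R,
          (k : ℂ) ^ (m - 1) / (ω - ((Real.sign k * |k| ^ m : ℝ) : ℂ)))
        atTop (𝓝 (((Real.pi / m : ℝ) : ℂ) * Complex.I))) := by
  have hlim {L : ℂ} (hL : Tendsto (fun S : ℝ => log (ω + S) - log (ω - S)) atTop (𝓝 L)) :
      Tendsto (fun R : ℝ => ∫ k in (-R)..R,
          (k : ℂ) ^ (m - 1) / (ω - ((Real.sign k * |k| ^ m : ℝ) : ℂ)))
        atTop (𝓝 ((m : ℂ)⁻¹ * L)) := by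
    simp_rw [Real.sign_mul_abs_pow_of_odd hodd, ofReal_pow,
      intervalIntegral_pow_div_sub_pow hodd him]
    exact (hL.comp (tendsto_pow_atTop hodd.pos.ne')).const_mul _
  refine ⟨fun hpos => ?_, fun hneg => ?_⟩
  · convert hlim (tendsto_log_add_ofReal_sub_log_sub_ofReal him
      (tendsto_log_div_ofReal_sub_one_of_im_pos hpos)) using 2
    push_cast; ring
  · convert hlim (tendsto_log_add_ofReal_sub_log_sub_ofReal him
      (tendsto_log_div_ofReal_sub_one_of_im_neg hneg)) using 2
    push_cast; ring

/-- For an odd integer `m ≥ 3` and complex `ω` off the real axis, the symmetric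
improper integral `lim_{R→∞} ∫_{-R}^{R} k^{m−1}/(ω − sign(k)|k|^m) dk` exists and
equals `−iπ/m` if `Im ω > 0` and `+iπ/m` if `Im ω < 0`. -/
theorem stmt2 (m : ℕ) (hm : 3 ≤ m) (hodd : Odd m) (ω : ℂ) (him : ω.im ≠ 0) :
    (0 < ω.im →
      Tendsto (fun R : ℝ => ∫ k in (-R)..R,
          (k : ℂ) ^ (m - 1) / (ω - ((Real.sign k * |k| ^ m : ℝ) : ℂ)))
        atTop (𝓝 (-(((Real.pi / m : ℝ) : ℂ) * Complex.I)))) ∧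
    (ω.im < 0 →
      Tendsto (fun R : ℝ => ∫ k in (-R)..R,
          (k : ℂ) ^ (m - 1) / (ω - ((Real.sign k * |k| ^ m : ℝ) : ℂ)))
        atTop (𝓝 (((Real.pi / m : ℝ) : ℂ) * Complex.I))) :=
  stmt2_general m hodd ω him
end

section
/- Let m > 1 be a real number, l a natural number with l < m − 1, and E < 0 a real number. Then the one-sided boundary values L_{m,l}(E − i0) := lim_{η→0+} L_{m,l}(E − iη) and L_{m,l}(E + i0) := lim_{η→0+} L_{m,l}(E + iη) exist and are nonzero, and their ratio satisfies L_{m,l}(E − i0) / L_{m,l}(E + i0) = (−1)^l · exp(−iπ(l+1)/m). -/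
/-!
Splitting the line at `0` and reflecting `k ↦ -k` gives `L(ω) = (-1)^l f(ω) - f(-ω)` with
`f(z) = ∫₀^∞ k^l / (k^m + z) dk`. The substitution `k = x^(1/m) t` gives `f(x) = f(1) x^s`,
`s = (l+1)/m - 1 ∈ (-1, 0)`, for `x > 0`; as `f` is holomorphic on the slit plane, the identity
theorem extends this to `f(z) = f(1) z^s` there. When `ω → E ∓ i0` with `E < 0`, `-ω → -E` stays
inside the slit plane while `ω^s → (-E)^s e^{∓iπs}`, so
`L(E ∓ i0) = f(1) (-E)^s ((-1)^l e^{∓iπs} - 1)`. These are nonzero because `sin πs ≠ 0`, and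
their ratio is `-(-1)^l e^{-iπs} = (-1)^l e^{-iπ(l+1)/m}`.
-/

open MeasureTheory Complex Filter Topology

open Set

noncomputable def halfLineIntegral (m : ℝ) (l : ℕ) (z : ℂ) : ℂ :=
  ∫ k in Ioi (0 : ℝ), (k : ℂ) ^ l / ((k ^ m : ℝ) + z)

section HalfLineIntegral

variable {m : ℝ} {l : ℕ}

lemma le_norm_ofReal_add {a : ℝ} (ha : 0 ≤ a) {z : ℂ} {r C : ℝ}
    (hr : r ≤ max z.re |z.im|) (hC : ‖z‖ ≤ C) : max r (a - C) ≤ ‖(a : ℂ) + z‖ := by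
  refine max_le (hr.trans (max_le ?_ ?_)) ?_
  · simpa using (re_le_norm ((a : ℂ) + z)).trans' (by simp [ha] : z.re ≤ ((a : ℂ) + z).re)
  · simpa using abs_im_le_norm ((a : ℂ) + z)
  · have := norm_sub_norm_le (a : ℂ) (-z)
    simp only [norm_real, Real.norm_eq_abs, abs_of_nonneg ha, norm_neg, sub_neg_eq_add] at this
    linarith

lemma max_re_abs_im_le_add_norm_sub (z w : ℂ) :
    max z.re |z.im| ≤ max w.re |w.im| + ‖z - w‖ := by
  have hre := re_le_norm (z - w)
  have him := abs_im_le_norm (z - w)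
  have := abs_sub_abs_le_abs_sub z.im w.im
  simp only [sub_re, sub_im] at hre him
  refine max_le ?_ ?_
  · linarith [le_max_left w.re |w.im|]
  · linarith [le_max_right w.re |w.im|]

lemma max_re_abs_im_pos_of_mem_slitPlane {z : ℂ} (hz : z ∈ slitPlane) :
    0 < max z.re |z.im| := by
  rcases mem_slitPlane_iff.mp hz with h | h
  · exact lt_max_of_lt_left h
  · exact lt_max_of_lt_right (abs_pos.mpr h)

lemma integrableOn_pow_div_max_rpow_sub_pow {p : ℕ} (hlp : (l : ℝ) + 1 < p * m) {r C : ℝ}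
    (hr : 0 < r) (hC : 0 ≤ C) :
    IntegrableOn (fun k : ℝ => k ^ l / max r (k ^ m - C) ^ p) (Ioi 0) := by
  have hm : 0 < m := by
    by_contra! h
    nlinarith [(l.cast_nonneg : (0 : ℝ) ≤ l), (p.cast_nonneg : (0 : ℝ) ≤ p)]
  -- beyond `K` the denominator is at least `k ^ m / 2`
  set K := (2 * C + 1) ^ m⁻¹
  have hK : 0 < K := by positivity
  have hKm : K ^ m = 2 * C + 1 := Real.rpow_inv_rpow (by linarith) hm.ne'
  have hmeas : ∀ μ : Measure ℝ,
      AEStronglyMeasurable (fun k : ℝ => k ^ l / max r (k ^ m - C) ^ p) μ :=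
    fun _ => (by fun_prop : Measurable _).aestronglyMeasurable
  rw [← Ioc_union_Ioi_eq_Ioi hK.le]
  refine IntegrableOn.union ?_ ?_
  · refine (integrable_const (K ^ l / r ^ p)).mono' (hmeas _) ?_
    filter_upwards [ae_restrict_mem measurableSet_Ioc] with k ⟨hk0, hkK⟩
    rw [Real.norm_of_nonneg (by positivity)]
    gcongr
    exact le_max_left _ _
  · refine ((integrableOn_Ioi_rpow_of_lt (by linarith : (l : ℝ) - p * m < -1) hK).const_mul
      (2 ^ p)).mono' (hmeas _) ?_
    filter_upwards [ae_restrict_mem measurableSet_Ioi] with k (hk : K < k)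
    have hk0 : 0 < k := hK.trans hk
    have hkm : 2 * C + 1 ≤ k ^ m := hKm ▸ Real.rpow_le_rpow hK.le hk.le hm.le
    have hkm0 : 0 < k ^ m := by positivity
    rw [Real.norm_of_nonneg (by positivity)]
    calc k ^ l / max r (k ^ m - C) ^ p ≤ k ^ l / (k ^ m / 2) ^ p := by
          gcongr
          exact le_max_of_le_right (by linarith)
      _ = 2 ^ p * k ^ ((l : ℝ) - p * m) := by
          rw [Real.rpow_sub hk0, Real.rpow_natCast, mul_comm (p : ℝ), Real.rpow_mul hk0.le,
            Real.rpow_natCast, div_pow]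
          field_simp

lemma norm_halfLineIntegrand_le {k : ℝ} (hk : 0 < k) (p : ℕ) {z : ℂ} {r C : ℝ} (hr : 0 < r)
    (hrz : r ≤ max z.re |z.im|) (hC : ‖z‖ ≤ C) :
    ‖(k : ℂ) ^ l / ((k ^ m : ℝ) + z) ^ p‖ ≤ k ^ l / max r (k ^ m - C) ^ p := by
  rw [norm_div, norm_pow, norm_pow, norm_real, Real.norm_of_nonneg hk.le]
  have := le_norm_ofReal_add (Real.rpow_nonneg hk.le m) hrz hC
  have : 0 < max r (k ^ m - C) := lt_max_of_lt_left hr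
  gcongr

lemma integrableOn_halfLineIntegrand (hl : (l : ℝ) + 1 < m) {z : ℂ} (hz : z ∈ slitPlane) :
    IntegrableOn (fun k : ℝ => (k : ℂ) ^ l / ((k ^ m : ℝ) + z)) (Ioi 0) := by
  have hr := max_re_abs_im_pos_of_mem_slitPlane hz
  refine (integrableOn_pow_div_max_rpow_sub_pow (p := 1) (by simpa using hl) hr
    (norm_nonneg z)).mono' (by fun_prop : Measurable _).aestronglyMeasurable ?_
  filter_upwards [ae_restrict_mem measurableSet_Ioi] with k (hk : 0 < k)
  simpa using norm_halfLineIntegrand_le (m := m) (l := l) hk 1 hr le_rfl le_rfl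

lemma differentiableAt_halfLineIntegral (hl : (l : ℝ) + 1 < m) {z₀ : ℂ}
    (hz₀ : z₀ ∈ slitPlane) : DifferentiableAt ℂ (halfLineIntegral m l) z₀ := by
  set ε := max z₀.re |z₀.im| / 2 with hε_def
  have hε : 0 < ε := half_pos (max_re_abs_im_pos_of_mem_slitPlane hz₀)
  have hball : ∀ z ∈ Metric.ball z₀ ε, ε ≤ max z.re |z.im| ∧ ‖z‖ ≤ ‖z₀‖ + ε := by
    intro z hz
    rw [Metric.mem_ball, dist_eq_norm] at hz
    have := max_re_abs_im_le_add_norm_sub z₀ z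
    rw [norm_sub_rev] at this
    exact ⟨by linarith [hε_def], by linarith [norm_le_insert' z z₀]⟩
  refine (hasDerivAt_integral_of_dominated_loc_of_deriv_le (μ := volume.restrict (Ioi 0))
    (F := fun z (k : ℝ) => (k : ℂ) ^ l / ((k ^ m : ℝ) + z))
    (F' := fun z k => -((k : ℂ) ^ l / ((k ^ m : ℝ) + z) ^ 2))
    (bound := fun k => k ^ l / max ε (k ^ m - (‖z₀‖ + ε)) ^ 2)
    (Metric.ball_mem_nhds z₀ hε)
    (Eventually.of_forall fun _ => (by fun_prop : Measurable _).aestronglyMeasurable)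
    (integrableOn_halfLineIntegrand hl hz₀) (by fun_prop : Measurable _).aestronglyMeasurable ?_
    (integrableOn_pow_div_max_rpow_sub_pow (by push_cast; linarith) hε (by positivity))
    ?_).2.differentiableAt
  · filter_upwards [ae_restrict_mem measurableSet_Ioi] with k (hk : 0 < k) z hz
    rw [norm_neg]
    exact norm_halfLineIntegrand_le hk 2 hε (hball z hz).1 (hball z hz).2
  · filter_upwards [ae_restrict_mem measurableSet_Ioi] with k (hk : 0 < k) z hz
    have hne : ((k ^ m : ℝ) : ℂ) + z ≠ 0 := norm_pos_iff.mp <| (lt_max_of_lt_left hε).trans_le <|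
      le_norm_ofReal_add (Real.rpow_nonneg hk.le m) (hball z hz).1 (hball z hz).2
    simpa [div_eq_mul_inv] using (((hasDerivAt_id z).const_add _).inv hne).const_mul ((k : ℂ) ^ l)

lemma halfLineIntegral_ofReal (hm : m ≠ 0) {x : ℝ} (hx : 0 < x) :
    halfLineIntegral m l x = halfLineIntegral m l 1 * (x : ℂ) ^ (((l + 1) / m - 1 : ℝ) : ℂ) := by
  set b := x ^ m⁻¹
  have hb : 0 < b := by positivity
  have hbm : b ^ m = x := Real.rpow_inv_rpow hx.le hm
  have hscale : ∀ k ∈ Ioi (0 : ℝ), (((b * k : ℝ) : ℂ) ^ l / (((b * k) ^ m : ℝ) + x))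
      = ((b ^ l / x : ℝ) : ℂ) * ((k : ℂ) ^ l / ((k ^ m : ℝ) + 1)) := by
    intro k (hk : 0 < k)
    rw [Real.mul_rpow hb.le hk.le, hbm]
    have : (x : ℂ) ≠ 0 := by exact_mod_cast hx.ne'
    have : ((k ^ m : ℝ) : ℂ) + 1 ≠ 0 := by exact_mod_cast (by positivity : (0 : ℝ) < k ^ m + 1).ne'
    push_cast
    rw [mul_pow]
    field_simp
  have key := integral_comp_mul_left_Ioi
    (fun t : ℝ => (t : ℂ) ^ l / ((t ^ m : ℝ) + x)) 0 hb
  rw [mul_zero, setIntegral_congr_fun measurableSet_Ioi hscale, integral_const_mul] at key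
  have hpow : b * (b ^ l / x) = x ^ ((l + 1) / m - 1 : ℝ) := by
    rw [Real.rpow_sub hx, Real.rpow_one, add_div, Real.rpow_add hx, div_eq_mul_inv (l : ℝ),
      mul_comm (l : ℝ), Real.rpow_mul hx.le, Real.rpow_natCast, one_div]
    ring
  have hfx : halfLineIntegral m l x = ((b * (b ^ l / x) : ℝ) : ℂ) * halfLineIntegral m l 1 := by
    rw [halfLineIntegral, halfLineIntegral, ofReal_mul, mul_assoc, key, real_smul, ← mul_assoc,
      ← ofReal_mul, mul_inv_cancel₀ hb.ne', ofReal_one, one_mul]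
  rw [hfx, hpow, ofReal_cpow hx.le, mul_comm]

lemma halfLineIntegral_eq_cpow (hl : (l : ℝ) + 1 < m) {z : ℂ} (hz : z ∈ slitPlane) :
    halfLineIntegral m l z = halfLineIntegral m l 1 * z ^ (((l + 1) / m - 1 : ℝ) : ℂ) := by
  have hf : AnalyticOnNhd ℂ (halfLineIntegral m l) slitPlane :=
    DifferentiableOn.analyticOnNhd
      (fun z hz => (differentiableAt_halfLineIntegral hl hz).differentiableWithinAt)
      isOpen_slitPlane
  have hg : AnalyticOnNhd ℂ (fun z => halfLineIntegral m l 1 * z ^ (((l + 1) / m - 1 : ℝ) : ℂ))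
      slitPlane := fun z hz => analyticAt_const.mul (analyticAt_id.cpow analyticAt_const hz)
  have hreal : Tendsto ofReal (𝓝[>] 1) (𝓝[≠] 1) := by
    refine tendsto_nhdsWithin_iff.mpr ⟨?_, eventually_mem_nhdsWithin.mono fun x hx => ?_⟩
    · simpa using (continuous_ofReal.tendsto 1).mono_left nhdsWithin_le_nhds
    · rw [mem_compl_singleton_iff, Ne, ← ofReal_one, ofReal_inj]
      exact hx.ne'
  refine hf.eqOn_of_preconnected_of_frequently_eq hg
    (starConvex_one_slitPlane.isPathConnected one_mem_slitPlane).isConnected.isPreconnected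
    one_mem_slitPlane (hreal.frequently (Eventually.frequently ?_)) hz
  have hm : m ≠ 0 := by linarith [(l.cast_nonneg : (0 : ℝ) ≤ l)]
  exact eventually_mem_nhdsWithin.mono fun x hx => halfLineIntegral_ofReal hm (one_pos.trans hx)

lemma halfLineIntegral_one_ne_zero (hl : (l : ℝ) + 1 < m) : halfLineIntegral m l 1 ≠ 0 := by
  have hreal : ∀ k ∈ Ioi (0 : ℝ),
      (k : ℂ) ^ l / ((k ^ m : ℝ) + 1) = ((k ^ l / (k ^ m + 1) : ℝ) : ℂ) := by
    intro k _
    push_cast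
    rfl
  have hint : IntegrableOn (fun k : ℝ => k ^ l / (k ^ m + 1)) (Ioi 0) := by
    have := ((integrableOn_halfLineIntegrand hl one_mem_slitPlane).congr_fun hreal
      measurableSet_Ioi).re
    simp only [RCLike.re_to_complex, ofReal_re] at this
    exact this
  have hpos : 0 < ∫ k in Ioi (0 : ℝ), k ^ l / (k ^ m + 1) := by
    refine (setIntegral_pos_iff_support_of_nonneg_ae ?_ hint).mpr ?_
    · filter_upwards [ae_restrict_mem measurableSet_Ioi] with (k : ℝ) (hk : 0 < k)
      positivity
    · have hsupp : Ioi (0 : ℝ) ⊆ Function.support fun k : ℝ => k ^ l / (k ^ m + 1) :=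
        fun k (hk : 0 < k) => (by positivity : 0 < k ^ l / (k ^ m + 1)).ne'
      rw [inter_eq_self_of_subset_right hsupp, Real.volume_Ioi]
      exact ENNReal.zero_lt_top
  rw [halfLineIntegral, setIntegral_congr_fun measurableSet_Ioi hreal, integral_complex_ofReal]
  exact_mod_cast hpos.ne'

lemma Lint_eq_halfLineIntegral (hl : (l : ℝ) + 1 < m) {ω : ℂ} (hω : ω.im ≠ 0) :
    Lint m l ω = (-1) ^ l * halfLineIntegral m l ω - halfLineIntegral m l (-ω) := by
  set F : ℝ → ℂ := fun k => (k : ℂ) ^ l / (ω - ((Real.sign k * |k| ^ m : ℝ) : ℂ))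
  have hpos : EqOn (fun k : ℝ => -((k : ℂ) ^ l / ((k ^ m : ℝ) + -ω))) F (Ioi 0) := by
    intro k (hk : 0 < k)
    simp only [F, Real.sign_of_pos hk, abs_of_pos hk, one_mul]
    rw [← div_neg]
    ring_nf
  have hneg : EqOn (fun k : ℝ => (-1) ^ l * ((k : ℂ) ^ l / ((k ^ m : ℝ) + ω))) (fun k => F (-k))
      (Ioi 0) := by
    intro k (hk : 0 < k)
    simp only [F, Real.sign_of_neg (neg_neg_of_pos hk), abs_neg, abs_of_pos hk, ofReal_neg,
      neg_pow (k : ℂ), neg_one_mul, sub_neg_eq_add, add_comm ω]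
    ring
  have hω_mem : ω ∈ slitPlane := mem_slitPlane_iff.mpr (Or.inr hω)
  have hnegω_mem : -ω ∈ slitPlane := mem_slitPlane_iff.mpr (Or.inr (by simpa using hω))
  have hFpos : IntegrableOn F (Ioi 0) :=
    (integrableOn_halfLineIntegrand hl hnegω_mem).neg.congr_fun hpos measurableSet_Ioi
  have hFneg : IntegrableOn F (Iic 0) := by
    rw [integrableOn_Iic_iff_integrableOn_Iio, ← (Measure.measurePreserving_neg volume)
      |>.integrableOn_comp_preimage (Homeomorph.neg ℝ).measurableEmbedding]
    simp only [Function.comp_def, neg_preimage, neg_Iio, neg_zero]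
    exact IntegrableOn.congr_fun ((integrableOn_halfLineIntegrand hl hω_mem).const_mul _) hneg
      measurableSet_Ioi
  rw [Lint, ← intervalIntegral.integral_Iic_add_Ioi hFneg hFpos, ← neg_zero,
    ← integral_comp_neg_Ioi, neg_zero, ← setIntegral_congr_fun measurableSet_Ioi hneg,
    ← setIntegral_congr_fun measurableSet_Ioi hpos, integral_const_mul, integral_neg,
    halfLineIntegral, halfLineIntegral, sub_eq_add_neg]

lemma tendsto_Lint_of_tendsto_cpow (hl : (l : ℝ) + 1 < m) {α : Type*} {L : Filter α} {E : ℝ}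
    (hE : E < 0) {ω : α → ℂ} {A : ℂ} (hω : Tendsto ω L (𝓝 E))
    (him : ∀ᶠ a in L, (ω a).im ≠ 0)
    (hA : Tendsto (fun a => ω a ^ (((l + 1) / m - 1 : ℝ) : ℂ)) L (𝓝 A)) :
    Tendsto (fun a => Lint m l (ω a)) L (𝓝 (halfLineIntegral m l 1 *
      ((-1) ^ l * A - (-(E : ℂ)) ^ (((l + 1) / m - 1 : ℝ) : ℂ)))) := by
  have hneg := (continuousAt_cpow_const (b := (((l + 1) / m - 1 : ℝ) : ℂ))
    (neg_ofReal_mem_slitPlane.mpr hE)).tendsto.comp hω.neg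
  refine Tendsto.congr' (him.mono fun a ha => ?_)
    (tendsto_const_nhds.mul ((hA.const_mul _).sub hneg))
  have hmem : ω a ∈ slitPlane := mem_slitPlane_iff.mpr (Or.inr ha)
  have hmem_neg : -ω a ∈ slitPlane := mem_slitPlane_iff.mpr (Or.inr (by simpa using ha))
  simp only [Function.comp_apply]
  rw [Lint_eq_halfLineIntegral hl ha, halfLineIntegral_eq_cpow hl hmem,
    halfLineIntegral_eq_cpow hl hmem_neg]
  ring

end HalfLineIntegral

section BoundaryValues

open scoped Real

lemma tendsto_sub_mul_I_nhdsWithin_im_neg (x : ℝ) :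
    Tendsto (fun η : ℝ => (x : ℂ) - η * I) (𝓝[>] 0) (𝓝[{z | z.im < 0}] x) := by
  refine tendsto_nhdsWithin_iff.mpr ⟨?_, eventually_mem_nhdsWithin.mono fun η hη => ?_⟩
  · simpa using ((by fun_prop : Continuous fun η : ℝ => (x : ℂ) - η * I).tendsto 0).mono_left
      nhdsWithin_le_nhds
  · simpa using hη

lemma tendsto_add_mul_I_nhdsWithin_im_nonneg (x : ℝ) :
    Tendsto (fun η : ℝ => (x : ℂ) + η * I) (𝓝[>] 0) (𝓝[{z | 0 ≤ z.im}] x) := by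
  refine tendsto_nhdsWithin_iff.mpr ⟨?_, eventually_mem_nhdsWithin.mono fun η hη => ?_⟩
  · simpa using ((by fun_prop : Continuous fun η : ℝ => (x : ℂ) + η * I).tendsto 0).mono_left
      nhdsWithin_le_nhds
  · simpa using le_of_lt hη

lemma exp_log_norm_mul_eq_neg_cpow {x : ℝ} (hx : x < 0) (c : ℂ) :
    exp (Real.log ‖(x : ℂ)‖ * c) = (-(x : ℂ)) ^ c := by
  rw [cpow_def_of_ne_zero (by simpa using hx.ne), norm_real, Real.norm_of_nonpos hx.le,
    ofReal_log (by linarith), ofReal_neg]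

lemma tendsto_cpow_of_tendsto_log {α : Type*} {L : Filter α} {f : α → ℂ} {ℓ : ℂ}
    (hf : Tendsto (fun a => log (f a)) L (𝓝 ℓ)) (hf0 : ∀ᶠ a in L, f a ≠ 0) (c : ℂ) :
    Tendsto (fun a => f a ^ c) L (𝓝 (exp (ℓ * c))) :=
  ((continuous_exp.tendsto _).comp (hf.mul_const c)).congr'
    (hf0.mono fun _ h => (cpow_def_of_ne_zero h c).symm)

lemma tendsto_sub_mul_I_cpow {x : ℝ} (hx : x < 0) (c : ℂ) :
    Tendsto (fun η : ℝ => ((x : ℂ) - η * I) ^ c) (𝓝[>] 0)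
      (𝓝 ((-(x : ℂ)) ^ c * exp (-(π * c * I)))) := by
  rw [← exp_log_norm_mul_eq_neg_cpow hx, ← exp_add,
    show Real.log ‖(x : ℂ)‖ * c + -(π * c * I) = (Real.log ‖(x : ℂ)‖ - π * I) * c by ring]
  refine tendsto_cpow_of_tendsto_log ((tendsto_log_nhdsWithin_im_neg_of_re_neg_of_im_zero
    (by simpa using hx) (ofReal_im x)).comp (tendsto_sub_mul_I_nhdsWithin_im_neg x)) ?_ c
  filter_upwards [self_mem_nhdsWithin] with η (hη : 0 < η) h
  simpa [hη.ne'] using congrArg im h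

lemma tendsto_add_mul_I_cpow {x : ℝ} (hx : x < 0) (c : ℂ) :
    Tendsto (fun η : ℝ => ((x : ℂ) + η * I) ^ c) (𝓝[>] 0)
      (𝓝 ((-(x : ℂ)) ^ c * exp (π * c * I))) := by
  rw [← exp_log_norm_mul_eq_neg_cpow hx, ← exp_add,
    show Real.log ‖(x : ℂ)‖ * c + π * c * I = (Real.log ‖(x : ℂ)‖ + π * I) * c by ring]
  refine tendsto_cpow_of_tendsto_log ((tendsto_log_nhdsWithin_im_nonneg_of_re_neg_of_im_zero
    (by simpa using hx) (ofReal_im x)).comp (tendsto_add_mul_I_nhdsWithin_im_nonneg x)) ?_ c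
  filter_upwards [self_mem_nhdsWithin] with η (hη : 0 < η) h
  simpa [hη.ne'] using congrArg im h

lemma sin_pi_mul_exponent_ne_zero {m : ℝ} {l : ℕ} (hl : (l : ℝ) + 1 < m) :
    Real.sin (π * ((l + 1) / m - 1)) ≠ 0 := by
  have hm : 0 < m := by linarith [(l.cast_nonneg : (0 : ℝ) ≤ l)]
  have hlt : (l + 1) / m < 1 := (div_lt_one hm).mpr hl
  have hgt : 0 < (l + 1) / m := by positivity
  exact (Real.sin_neg_of_neg_of_neg_pi_lt (by nlinarith [Real.pi_pos])
    (by nlinarith [Real.pi_pos])).ne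

lemma neg_one_pow_mul_exp_ne_one (l : ℕ) {θ : ℝ} (hθ : Real.sin θ ≠ 0) :
    (-1 : ℂ) ^ l * exp (θ * I) ≠ 1 := by
  intro h
  have him := congrArg im h
  rw [show (-1 : ℂ) ^ l = ((-1 : ℝ) ^ l : ℝ) by push_cast; rfl, im_ofReal_mul,
    exp_ofReal_mul_I_im, one_im] at him
  exact hθ ((mul_eq_zero.mp him).resolve_left (pow_ne_zero _ (by norm_num)))

lemma div_eq_neg_mul_inv_of_sq_eq_one {K : Type*} [Field K] {u w : K} (hu : u ^ 2 = 1) (hw : w ≠ 0)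
    (huw : u * w ≠ 1) : (u * w⁻¹ - 1) / (u * w - 1) = -u * w⁻¹ := by
  rw [div_eq_iff (sub_ne_zero.mpr huw)]
  field_simp
  linear_combination w * hu

end BoundaryValues

theorem stmt4_general (m : ℝ) (l : ℕ) (hl : (l : ℝ) < m - 1)
    (E : ℝ) (hE : E < 0) :
    ∃ Lminus Lplus : ℂ,
      Tendsto (fun η : ℝ => Lint m l ((E : ℂ) - (η : ℂ) * Complex.I))
        (𝓝[>] 0) (𝓝 Lminus) ∧
      Tendsto (fun η : ℝ => Lint m l ((E : ℂ) + (η : ℂ) * Complex.I))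
        (𝓝[>] 0) (𝓝 Lplus) ∧
      Lminus ≠ 0 ∧ Lplus ≠ 0 ∧
      Lminus / Lplus =
        (-1 : ℂ) ^ l *
          Complex.exp (-(((Real.pi * ((l : ℝ) + 1) / m : ℝ) : ℂ) * Complex.I)) := by
  have hlm : (l : ℝ) + 1 < m := by linarith
  have hsin := sin_pi_mul_exponent_ne_zero hlm
  set s : ℝ := (l + 1) / m - 1 with hs
  set w : ℂ := exp (Real.pi * s * I) with hw
  have huw : (-1 : ℂ) ^ l * w ≠ 1 := by
    simpa using neg_one_pow_mul_exp_ne_one l hsin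
  have huw' : (-1 : ℂ) ^ l * w⁻¹ ≠ 1 := by
    rw [hw, ← exp_neg]
    simpa using neg_one_pow_mul_exp_ne_one l (θ := -(Real.pi * s))
      (by rwa [Real.sin_neg, neg_ne_zero])
  set C := halfLineIntegral m l 1 * (-(E : ℂ)) ^ (s : ℂ)
  have hC : C ≠ 0 := mul_ne_zero (halfLineIntegral_one_ne_zero hlm)
    (cpow_ne_zero_iff.mpr (Or.inl (by simpa using hE.ne)))
  refine ⟨C * ((-1) ^ l * w⁻¹ - 1), C * ((-1) ^ l * w - 1), ?_, ?_,
    mul_ne_zero hC (sub_ne_zero.mpr huw'), mul_ne_zero hC (sub_ne_zero.mpr huw), ?_⟩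
  · have him : ∀ᶠ η : ℝ in 𝓝[>] 0, ((E : ℂ) - η * I).im ≠ 0 :=
      eventually_mem_nhdsWithin.mono fun η (hη : 0 < η) => by simpa using hη.ne'
    convert tendsto_Lint_of_tendsto_cpow hlm hE
      ((tendsto_sub_mul_I_nhdsWithin_im_neg E).mono_right nhdsWithin_le_nhds) him
      (tendsto_sub_mul_I_cpow hE _) using 2
    rw [hw, ← exp_neg]
    ring
  · have him : ∀ᶠ η : ℝ in 𝓝[>] 0, ((E : ℂ) + η * I).im ≠ 0 :=
      eventually_mem_nhdsWithin.mono fun η (hη : 0 < η) => by simpa using hη.ne'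
    convert tendsto_Lint_of_tendsto_cpow hlm hE
      ((tendsto_add_mul_I_nhdsWithin_im_nonneg E).mono_right nhdsWithin_le_nhds) him
      (tendsto_add_mul_I_cpow hE _) using 2
    rw [hw]
    ring
  · rw [mul_div_mul_left _ _ hC, div_eq_neg_mul_inv_of_sq_eq_one
      (by rw [← pow_mul, mul_comm, pow_mul, neg_one_sq, one_pow]) (exp_ne_zero _) huw, neg_mul,
      ← mul_neg, ← exp_neg]
    congr 1
    rw [show (((Real.pi * (l + 1) / m : ℝ)) : ℂ) * I = Real.pi * s * I + Real.pi * I by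
      rw [hs]; push_cast; ring, neg_add, exp_add, exp_neg (Real.pi * I), exp_pi_mul_I]
    ring

/-- For `m > 1`, `l < m − 1` and `E < 0`, the boundary values
`L_{m,l}(E ∓ i0) = lim_{η→0+} L_{m,l}(E ∓ iη)` exist, are nonzero, and
`L_{m,l}(E − i0)/L_{m,l}(E + i0) = (−1)^l e^{−iπ(l+1)/m}`. -/
theorem stmt4 (m : ℝ) (hm : 1 < m) (l : ℕ) (hl : (l : ℝ) < m - 1)
    (E : ℝ) (hE : E < 0) :
    ∃ Lminus Lplus : ℂ,
      Tendsto (fun η : ℝ => Lint m l ((E : ℂ) - (η : ℂ) * Complex.I))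
        (𝓝[>] 0) (𝓝 Lminus) ∧
      Tendsto (fun η : ℝ => Lint m l ((E : ℂ) + (η : ℂ) * Complex.I))
        (𝓝[>] 0) (𝓝 Lplus) ∧
      Lminus ≠ 0 ∧ Lplus ≠ 0 ∧
      Lminus / Lplus =
        (-1 : ℂ) ^ l *
          Complex.exp (-(((Real.pi * ((l : ℝ) + 1) / m : ℝ) : ℂ) * Complex.I)) :=
  stmt4_general m l hl E hE
end

section
/- Let m > 1 be a real number, l a natural number with l < m − 1, and ω a complex number not lying in the half-line [0, ∞). Then the integral ∫_0^∞ k^l / (ω − k^m) dk converges absolutely and equals −(π / (m · sin(π(l+1)/m))) · (−ω)^{((l+1)/m) − 1}, where the complex power is taken with the principal branch of the logarithm. -/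
/-!
Substituting `y = k ^ m` turns the integral into `-(1/m) ∫₀^∞ t^(a-1) / (t + z) dt` with
`a = (l+1)/m ∈ (0, 1)` and `z = -ω` in the slit plane. For `z = x > 0` the substitution
`t = x s / (1 - s)` turns this integral into `x^(a-1) B(a, 1-a) = x^(a-1) π / sin (π a)`
(Euler's reflection formula). Since `‖t + z‖ ≥ δ (1 + t)` locally uniformly in `z`, both sides
are holomorphic on the slit plane, so the identity theorem extends the formula from the positive
reals to all of it.
-/

open MeasureTheory Complex Filter Topology Set
open scoped ComplexOrder

noncomputable def stieltjesIntegrand (a : ℝ) (z : ℂ) (t : ℝ) : ℂ :=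
  ((t ^ (a - 1) : ℝ) : ℂ) / (t + z)

lemma exists_mul_one_add_le_norm_ofReal_add {z : ℂ} (hz : z ∈ slitPlane) :
    ∃ δ > 0, ∀ t : ℝ, 0 ≤ t → δ * (1 + t) ≤ ‖(t : ℂ) + z‖ := by
  obtain ⟨c, hc, hball⟩ := Metric.isOpen_iff.mp isOpen_slitPlane z hz
  have hc_le : ∀ t : ℝ, 0 ≤ t → c ≤ ‖(t : ℂ) + z‖ := by
    intro t ht
    by_contra! h
    have hmem : ((-t : ℝ) : ℂ) ∈ slitPlane := hball <| by
      rwa [Metric.mem_ball, dist_eq_norm, ← norm_neg, ofReal_neg, neg_sub, sub_neg_eq_add,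
        add_comm]
    linarith [ofReal_mem_slitPlane.mp hmem]
  have ht_le : ∀ t : ℝ, 0 ≤ t → t ≤ ‖(t : ℂ) + z‖ + ‖z‖ := fun t ht => by
    simpa [abs_of_nonneg ht] using norm_le_add_norm_add (t : ℂ) z
  refine ⟨c / (1 + ‖z‖ + c), by positivity, fun t ht => ?_⟩
  rw [div_mul_eq_mul_div, div_le_iff₀ (by positivity)]
  nlinarith [hc_le t ht, ht_le t ht, norm_nonneg z]

lemma exists_ball_mul_one_add_le_norm_ofReal_add {z₀ : ℂ} (hz₀ : z₀ ∈ slitPlane) :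
    ∃ δ > 0, ∀ z ∈ Metric.ball z₀ δ, ∀ t : ℝ, 0 ≤ t → δ * (1 + t) ≤ ‖(t : ℂ) + z‖ := by
  obtain ⟨δ, hδ, hle⟩ := exists_mul_one_add_le_norm_ofReal_add hz₀
  refine ⟨δ / 2, half_pos hδ, fun z hz t ht => ?_⟩
  have hdist : ‖z - z₀‖ < δ / 2 := by rwa [← dist_eq_norm]
  have htri : ‖(t : ℂ) + z₀‖ ≤ ‖(t : ℂ) + z‖ + ‖z - z₀‖ := by
    simpa using norm_add_le ((t : ℂ) + z) (z₀ - z) |>.trans_eq (by rw [norm_sub_rev])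
  nlinarith [hle t ht]

section SubstitutionMap

variable {x : ℝ}

lemma image_mul_div_one_sub_Ioo (hx : 0 < x) :
    (fun s => x * s / (1 - s)) '' Ioo 0 1 = Ioi 0 := by
  ext t
  constructor
  · rintro ⟨s, ⟨hs₀, hs₁⟩, rfl⟩
    exact div_pos (mul_pos hx hs₀) (sub_pos.mpr hs₁)
  · intro (ht : 0 < t)
    refine ⟨t / (x + t), ⟨by positivity, (div_lt_one (by positivity)).mpr (by linarith)⟩, ?_⟩
    simp only [one_sub_div (by positivity : x + t ≠ 0), add_sub_cancel_right]
    field_simp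

lemma injOn_mul_div_one_sub (hx : x ≠ 0) : InjOn (fun s => x * s / (1 - s)) (Ioo 0 1) := by
  intro s hs r hr h
  have hs₁ : 1 - s ≠ 0 := (sub_pos.mpr hs.2).ne'
  have hr₁ : 1 - r ≠ 0 := (sub_pos.mpr hr.2).ne'
  simp only [div_eq_div_iff hs₁ hr₁] at h
  have hx_mul : x * (s - r) = 0 := by linear_combination h
  simpa [hx, sub_eq_zero] using hx_mul

lemma hasDerivAt_mul_div_one_sub (x : ℝ) {s : ℝ} (hs : s ≠ 1) :
    HasDerivAt (fun s => x * s / (1 - s)) (x / (1 - s) ^ 2) s := by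
  have hs₁ : 1 - s ≠ 0 := sub_ne_zero.mpr hs.symm
  refine ((hasDerivAt_id s).const_mul x |>.div ((hasDerivAt_id s).const_sub 1) hs₁).congr_deriv ?_
  simp only [id]
  field_simp
  ring

end SubstitutionMap

section StieltjesIntegrand

variable {a x : ℝ}

@[fun_prop]
lemma measurable_stieltjesIntegrand (z : ℂ) : Measurable (stieltjesIntegrand a z) := by
  unfold stieltjesIntegrand
  fun_prop

lemma norm_stieltjesIntegrand_one {t : ℝ} (ht : 0 < t) :
    ‖stieltjesIntegrand a 1 t‖ = t ^ (a - 1) / (1 + t) := by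
  rw [stieltjesIntegrand, norm_div, norm_real, Real.norm_of_nonneg (by positivity),
    ← ofReal_one, ← ofReal_add, norm_real, Real.norm_of_nonneg (by positivity), add_comm]

lemma norm_stieltjesIntegrand_le {δ t : ℝ} {z : ℂ} (hδ : 0 < δ) (ht : 0 < t)
    (hz : δ * (1 + t) ≤ ‖(t : ℂ) + z‖) :
    ‖stieltjesIntegrand a z t‖ ≤ δ⁻¹ * ‖stieltjesIntegrand a 1 t‖ := by
  rw [norm_stieltjesIntegrand_one ht, stieltjesIntegrand, norm_div, norm_real,
    Real.norm_of_nonneg (by positivity), ← div_eq_inv_mul, div_div, mul_comm (1 + t)]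
  gcongr

lemma hasDerivAt_stieltjesIntegrand {z : ℂ} {t : ℝ} (hz : (t : ℂ) + z ≠ 0) :
    HasDerivAt (fun w => stieltjesIntegrand a w t) (-(stieltjesIntegrand a z t / (t + z))) z := by
  refine ((hasDerivAt_const z ((t ^ (a - 1) : ℝ) : ℂ)).div
    ((hasDerivAt_id z).const_add (t : ℂ)) hz).congr_deriv ?_
  simp only [stieltjesIntegrand, id]
  field_simp
  ring

lemma abs_deriv_smul_stieltjesIntegrand_comp (hx : 0 < x) {s : ℝ} (hs : s ∈ Ioo 0 1) :
    |x / (1 - s) ^ 2| • stieltjesIntegrand a x (x * s / (1 - s)) =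
      ((x ^ (a - 1) : ℝ) : ℂ) *
        ((s : ℂ) ^ ((a : ℂ) - 1) * (1 - (s : ℂ)) ^ ((1 - (a : ℂ)) - 1)) := by
  obtain ⟨hs₀, hs₁⟩ := hs
  have hs₁' : 0 < 1 - s := sub_pos.mpr hs₁
  have hreal : |x / (1 - s) ^ 2| * ((x * s / (1 - s)) ^ (a - 1) / (x * s / (1 - s) + x)) =
      x ^ (a - 1) * (s ^ (a - 1) * (1 - s) ^ (-a)) := by
    have hpow : (1 - s) ^ (a - 1) = ((1 - s) ^ (-a) * (1 - s))⁻¹ := by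
      rw [← Real.rpow_add_one hs₁'.ne', ← Real.rpow_neg hs₁'.le]
      ring_nf
    rw [abs_of_pos (by positivity), Real.div_rpow (by positivity) hs₁'.le,
      Real.mul_rpow hx.le hs₀.le, hpow]
    field_simp
    ring
  rw [show (1 : ℂ) - s = ((1 - s : ℝ) : ℂ) by push_cast; ring,
    show (a : ℂ) - 1 = ((a - 1 : ℝ) : ℂ) by push_cast; ring,
    show (1 - (a : ℂ)) - 1 = ((-a : ℝ) : ℂ) by push_cast; ring,
    ← ofReal_cpow hs₀.le, ← ofReal_cpow hs₁'.le, stieltjesIntegrand, ← ofReal_add,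
    ← ofReal_div, real_smul, ← ofReal_mul, hreal]
  push_cast
  ring

lemma integrableOn_stieltjesIntegrand_ofReal (ha : a ∈ Ioo 0 1) (hx : 0 < x) :
    IntegrableOn (stieltjesIntegrand a x) (Ioi 0) := by
  rw [← image_mul_div_one_sub_Ioo hx, integrableOn_image_iff_integrableOn_abs_deriv_smul
    measurableSet_Ioo (fun s hs => (hasDerivAt_mul_div_one_sub x hs.2.ne).hasDerivWithinAt)
    (injOn_mul_div_one_sub hx.ne')]
  have hbeta : IntegrableOn _ (Ioo (0 : ℝ) 1) :=
    (intervalIntegrable_iff_integrableOn_Ioo_of_le zero_le_one).mp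
      (betaIntegral_convergent (u := a) (v := 1 - a) (by simpa using ha.1) (by simpa using ha.2))
  exact IntegrableOn.congr_fun (hbeta.const_mul _)
    (fun s hs => (abs_deriv_smul_stieltjesIntegrand_comp hx hs).symm) measurableSet_Ioo

lemma integral_stieltjesIntegrand_ofReal (ha : a ∈ Ioo 0 1) (hx : 0 < x) :
    ∫ t in Ioi 0, stieltjesIntegrand a x t =
      Real.pi / Complex.sin (Real.pi * a) * (x : ℂ) ^ ((a : ℂ) - 1) := by
  rw [← image_mul_div_one_sub_Ioo hx, integral_image_eq_integral_abs_deriv_smul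
    measurableSet_Ioo (fun s hs => (hasDerivAt_mul_div_one_sub x hs.2.ne).hasDerivWithinAt)
    (injOn_mul_div_one_sub hx.ne'), setIntegral_congr_fun measurableSet_Ioo
    (fun s hs => abs_deriv_smul_stieltjesIntegrand_comp hx hs), integral_const_mul,
    ← integral_Ioc_eq_integral_Ioo, ← intervalIntegral.integral_of_le zero_le_one,
    ← betaIntegral, betaIntegral_eq_Gamma_mul_div _ _ (by simpa using ha.1) (by simpa using ha.2),
    add_sub_cancel, Gamma_one, div_one, Gamma_mul_Gamma_one_sub,
    show (a : ℂ) - 1 = ((a - 1 : ℝ) : ℂ) by push_cast; ring, ← ofReal_cpow hx.le]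
  ring

lemma integrableOn_stieltjesIntegrand (ha : a ∈ Ioo 0 1) {z : ℂ} (hz : z ∈ slitPlane) :
    IntegrableOn (stieltjesIntegrand a z) (Ioi 0) := by
  obtain ⟨δ, hδ, hle⟩ := exists_mul_one_add_le_norm_ofReal_add hz
  refine Integrable.mono' ((integrableOn_stieltjesIntegrand_ofReal ha one_pos).norm.const_mul δ⁻¹)
    (measurable_stieltjesIntegrand z).aestronglyMeasurable ?_
  filter_upwards [self_mem_ae_restrict measurableSet_Ioi] with t (ht : 0 < t)
  simpa using norm_stieltjesIntegrand_le hδ ht (hle t ht.le)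

lemma differentiableOn_integral_stieltjesIntegrand (ha : a ∈ Ioo 0 1) :
    DifferentiableOn ℂ (fun z => ∫ t in Ioi 0, stieltjesIntegrand a z t) slitPlane := by
  intro z₀ hz₀
  obtain ⟨δ, hδ, hle⟩ := exists_ball_mul_one_add_le_norm_ofReal_add hz₀
  have hδ_le : ∀ z ∈ Metric.ball z₀ δ, ∀ t : ℝ, 0 < t → δ ≤ ‖(t : ℂ) + z‖ := fun z hz t ht => by
    nlinarith [hle z hz t ht.le]
  have hbound : Integrable (fun t => δ⁻¹ * (δ⁻¹ * ‖stieltjesIntegrand a 1 t‖))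
      (volume.restrict (Ioi 0)) :=
    ((integrableOn_stieltjesIntegrand_ofReal ha one_pos).norm.const_mul δ⁻¹).const_mul δ⁻¹
  refine (hasDerivAt_integral_of_dominated_loc_of_deriv_le (Metric.ball_mem_nhds z₀ hδ)
    (F' := fun z t => -(stieltjesIntegrand a z t / (t + z)))
    (Eventually.of_forall fun z => (measurable_stieltjesIntegrand z).aestronglyMeasurable)
    (integrableOn_stieltjesIntegrand ha hz₀) (Measurable.aestronglyMeasurable (by fun_prop)) ?_
    hbound ?_).2.differentiableAt.differentiableWithinAt
  all_goals filter_upwards [self_mem_ae_restrict measurableSet_Ioi] with t (ht : 0 < t) z hz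
  · rw [norm_neg, norm_div, div_eq_inv_mul]
    gcongr
    · exact hδ_le z hz t ht
    · simpa using norm_stieltjesIntegrand_le hδ ht (hle z hz t ht.le)
  · exact hasDerivAt_stieltjesIntegrand (norm_pos_iff.mp (hδ.trans_le (hδ_le z hz t ht)))

end StieltjesIntegrand

lemma frequently_ofReal_pos_nhdsNE_one : ∃ᶠ w : ℂ in 𝓝[≠] 1, ∃ x : ℝ, 0 < x ∧ w = x := by
  have hmap : Tendsto ((↑) : ℝ → ℂ) (𝓝[≠] 1) (𝓝[≠] 1) :=
    tendsto_nhdsWithin_of_tendsto_nhds_of_eventually_within _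
      (continuous_ofReal.continuousWithinAt.tendsto.trans_eq (congrArg 𝓝 ofReal_one))
      (eventually_nhdsWithin_of_forall fun x hx => by simpa [← ofReal_one] using hx)
  exact hmap.frequently <| (eventually_nhdsWithin_of_eventually_nhds
    (lt_mem_nhds one_pos)).frequently.mono fun x (hx : 0 < x) => ⟨x, hx, rfl⟩

lemma integral_stieltjesIntegrand {a : ℝ} (ha : a ∈ Ioo 0 1) {z : ℂ} (hz : z ∈ slitPlane) :
    ∫ t in Ioi 0, stieltjesIntegrand a z t =
      Real.pi / Complex.sin (Real.pi * a) * z ^ ((a : ℂ) - 1) := by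
  have hrhs : AnalyticOnNhd ℂ
      (fun w : ℂ => Real.pi / Complex.sin (Real.pi * a) * w ^ ((a : ℂ) - 1)) slitPlane :=
    fun w hw => analyticAt_const.mul (analyticAt_id.cpow analyticAt_const hw)
  refine ((differentiableOn_integral_stieltjesIntegrand ha).analyticOnNhd isOpen_slitPlane)
    |>.eqOn_of_preconnected_of_frequently_eq hrhs
      (starConvex_one_slitPlane.isPathConnected one_mem_slitPlane).isConnected.isPreconnected
      one_mem_slitPlane ?_ hz
  exact frequently_ofReal_pos_nhdsNE_one.mono fun w ⟨x, hx, hw⟩ =>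
    hw ▸ integral_stieltjesIntegrand_ofReal ha hx

lemma integral_rpow_sub_one_smul_comp_rpow {E : Type*} [NormedAddCommGroup E] [NormedSpace ℝ E]
    (g : ℝ → E) {p : ℝ} (hp : 0 < p) :
    ∫ x in Ioi 0, x ^ (p - 1) • g (x ^ p) = p⁻¹ • ∫ y in Ioi 0, g y := by
  have h := integral_comp_rpow_Ioi_of_pos (g := g) hp
  simp_rw [mul_smul] at h
  rw [← h, integral_smul, inv_smul_smul₀ hp.ne']

lemma rpow_sub_one_smul_stieltjesIntegrand_rpow {b m k : ℝ} (hm : m ≠ 0) (hk : 0 < k) (z : ℂ) :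
    k ^ (m - 1) • stieltjesIntegrand (b / m) z (k ^ m) =
      ((k ^ (b - 1) : ℝ) : ℂ) / ((k ^ m : ℝ) + z) := by
  rw [stieltjesIntegrand, real_smul, ← mul_div_assoc, ← ofReal_mul, ← Real.rpow_mul hk.le,
    ← Real.rpow_add hk, show m - 1 + m * (b / m - 1) = b - 1 by field_simp; ring]

/-- For `m > 1`, `l < m − 1`, and complex `ω` not on the half-line `[0, ∞)`, the
integral `∫_0^∞ k^l/(ω − k^m) dk` converges absolutely and equals
`−(π/(m sin(π(l+1)/m))) (−ω)^{(l+1)/m − 1}` with the principal branch power. -/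
theorem stmt5 (m : ℝ) (hm : 1 < m) (l : ℕ) (hl : (l : ℝ) < m - 1)
    (ω : ℂ) (hω : ∀ x : ℝ, 0 ≤ x → ω ≠ (x : ℂ)) :
    IntegrableOn (fun k : ℝ => (k : ℂ) ^ l / (ω - ((k ^ m : ℝ) : ℂ))) (Set.Ioi 0) ∧
      (∫ k in Set.Ioi (0 : ℝ), (k : ℂ) ^ l / (ω - ((k ^ m : ℝ) : ℂ))) =
        -(((Real.pi / (m * Real.sin (Real.pi * ((l : ℝ) + 1) / m)) : ℝ) : ℂ)) *
          (-ω) ^ (((((l : ℝ) + 1) / m - 1 : ℝ) : ℂ)) := by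
  have hm₀ : 0 < m := by linarith
  have ha : ((l : ℝ) + 1) / m ∈ Ioo 0 1 := ⟨by positivity, (div_lt_one hm₀).mpr (by linarith)⟩
  have hz : -ω ∈ slitPlane := mem_slitPlane_iff_not_le_zero.mpr fun h => by
    have h₀ : (0 : ℂ) ≤ ω := neg_nonpos.mp h
    exact hω ω.re (nonneg_iff.mp h₀).1 (eq_re_of_ofReal_le (r := 0) (by rwa [ofReal_zero]))
  have heq : EqOn (fun k : ℝ => (k : ℂ) ^ l / (ω - ((k ^ m : ℝ) : ℂ)))
      (fun k => -(k ^ (m - 1) • stieltjesIntegrand (((l : ℝ) + 1) / m) (-ω) (k ^ m))) (Ioi 0) := by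
    intro k (hk : 0 < k)
    dsimp only
    rw [rpow_sub_one_smul_stieltjesIntegrand_rpow hm₀.ne' hk, add_sub_cancel_right,
      Real.rpow_natCast, ← div_neg, neg_add, neg_neg, ← sub_eq_neg_add]
    push_cast
    rfl
  constructor
  · exact ((integrableOn_Ioi_comp_rpow_iff' _ hm₀.ne').mpr
      (integrableOn_stieltjesIntegrand ha hz)).neg.congr_fun heq.symm measurableSet_Ioi
  · rw [setIntegral_congr_fun measurableSet_Ioi heq, integral_neg,
      integral_rpow_sub_one_smul_comp_rpow _ hm₀, integral_stieltjesIntegrand ha hz, real_smul]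
    push_cast
    field_simp
end

section
/- Let D ≥ 1 be a natural number and x_1, …, x_D complex numbers such that x_i x_j ≠ 1 for all i, j. Then the D × D matrix C with entries C_{ij} = 1/(1 − x_i x_j) satisfies det C = (∏_{1 ≤ j < i ≤ D} (x_i − x_j)²) / (∏_{i=1}^D ∏_{j=1}^D (1 − x_i x_j)). -/
/-!
This is the case `y = x` of the Cauchy-type identity
`det (1 / (1 - x i * y j)) = ∏_{j<i} (x i - x j) (y i - y j) / ∏_{i,j} (1 - x i * y j)`,
proved by induction on the size. Subtracting from each row `i ≠ 0` the multiple
`(1 - x 0 y 0) / (1 - x i y 0)` of row `0` clears the first column below the corner, and the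
remaining entries become
`(x i - x 0) / (1 - x i y 0) * (y j - y 0) / (1 - x 0 y j) / (1 - x i y j)`,
so the minor is the same matrix for the shorter vectors, up to row and column scalings.
-/

open Finset

namespace Matrix

variable {R : Type*} [CommRing R] {n : ℕ}

theorem det_succ_of_forall_succ_zero_eq_zero {A : Matrix (Fin (n + 1)) (Fin (n + 1)) R}
    (hA : ∀ i : Fin n, A i.succ 0 = 0) :
    A.det = A 0 0 * (A.submatrix Fin.succ Fin.succ).det := by
  rw [det_succ_column_zero, Fin.sum_univ_succ, Fintype.sum_eq_zero _ fun i => by simp [hA],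
    add_zero]
  simp

end Matrix

theorem Fin.prod_prod_filter_lt_succ {M : Type*} [CommMonoid M] {n : ℕ}
    (f : Fin (n + 1) → Fin (n + 1) → M) :
    ∏ i, ∏ j ∈ univ.filter (fun j => j < i), f i j =
      (∏ i : Fin n, f i.succ 0) *
        ∏ i : Fin n, ∏ j ∈ univ.filter (fun j => j < i), f i.succ j.succ := by
  rw [Fin.prod_univ_succ, univ.filter_false_of_mem fun j _ => Fin.not_lt_zero j, prod_empty,
    one_mul, ← prod_mul_distrib]
  refine prod_congr rfl fun i _ => ?_
  rw [prod_filter, prod_filter, Fin.prod_univ_succ]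
  simp [Fin.succ_lt_succ_iff]

theorem Fin.prod_prod_succ {M : Type*} [CommMonoid M] {n : ℕ}
    (f : Fin (n + 1) → Fin (n + 1) → M) :
    ∏ i, ∏ j, f i j =
      f 0 0 * (∏ j : Fin n, f 0 j.succ) * (∏ i : Fin n, f i.succ 0) *
        ∏ i : Fin n, ∏ j : Fin n, f i.succ j.succ := by
  simp only [Fin.prod_univ_succ (n := n), prod_mul_distrib, mul_assoc]

variable {K : Type*} [Field K]

theorem one_div_one_sub_mul_sub_eq {a b c d : K} (hab : a * b ≠ 1) (had : a * d ≠ 1)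
    (hcb : c * b ≠ 1) :
    1 / (1 - a * b) - (1 - c * d) / (1 - a * d) * (1 / (1 - c * b)) =
      (a - c) / (1 - a * d) * ((b - d) / (1 - c * b) * (1 / (1 - a * b))) := by
  have := sub_ne_zero_of_ne hab.symm
  have := sub_ne_zero_of_ne had.symm
  have : 1 - b * c ≠ 0 := sub_ne_zero_of_ne (mul_comm c b ▸ hcb).symm
  field_simp
  ring

open Matrix

theorem det_one_div_one_sub_mul_succ {n : ℕ} (x y : Fin (n + 1) → K)
    (h : ∀ i j, x i * y j ≠ 1) :
    det (of fun i j => 1 / (1 - x i * y j)) =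
      1 / (1 - x 0 * y 0) * ((∏ i : Fin n, (x i.succ - x 0) / (1 - x i.succ * y 0)) *
        ((∏ j : Fin n, (y j.succ - y 0) / (1 - x 0 * y j.succ)) *
          det (of fun i j : Fin n => 1 / (1 - x i.succ * y j.succ)))) := by
  let C : Matrix (Fin (n + 1)) (Fin (n + 1)) K := of fun i j => 1 / (1 - x i * y j)
  let d : Fin (n + 1) → K := Fin.cons 0 fun k => (1 - x 0 * y 0) / (1 - x k.succ * y 0)
  let B : Matrix (Fin (n + 1)) (Fin (n + 1)) K := of fun i j => C i j - d i * C 0 j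
  have hB : B.det = C.det :=
    det_eq_of_forall_row_eq_smul_add_const (-d) 0 (by simp [d]) fun i j => by
      simp only [B, of_apply, Pi.neg_apply]; ring
  have hB_succ_zero (i : Fin n) : B i.succ 0 = 0 := by
    simp only [B, C, d, of_apply, Fin.cons_succ]
    rw [div_mul_div_comm, mul_one, div_mul_cancel_right₀ (sub_ne_zero_of_ne (h 0 0).symm),
      one_div, sub_self]
  set C' : Matrix (Fin n) (Fin n) K := of fun i j => 1 / (1 - x i.succ * y j.succ)
  have hB_minor : B.submatrix Fin.succ Fin.succ = of fun i j =>
      (x i.succ - x 0) / (1 - x i.succ * y 0) *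
        (of fun i j => (y j.succ - y 0) / (1 - x 0 * y j.succ) * C' i j) i j := by
    ext i j
    simpa [B, C, C', d] using
      one_div_one_sub_mul_sub_eq (h i.succ j.succ) (h i.succ 0) (h 0 j.succ)
  rw [← hB, det_succ_of_forall_succ_zero_eq_zero hB_succ_zero, hB_minor, det_mul_column,
    det_mul_row]
  simp [B, C, d]

theorem det_one_div_one_sub_mul {n : ℕ} (x y : Fin n → K) (h : ∀ i j, x i * y j ≠ 1) :
    det (of fun i j => 1 / (1 - x i * y j)) =
      (∏ i, ∏ j ∈ univ.filter (fun j => j < i), (x i - x j) * (y i - y j)) /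
        ∏ i, ∏ j, (1 - x i * y j) := by
  induction n with
  | zero => simp
  | succ n ih =>
    have hne (i j) : 1 - x i * y j ≠ 0 := sub_ne_zero_of_ne (h i j).symm
    rw [det_one_div_one_sub_mul_succ x y h, ih _ _ fun i j => h _ _, Fin.prod_prod_filter_lt_succ,
      Fin.prod_prod_succ, prod_div_distrib, prod_div_distrib, prod_mul_distrib]
    field_simp

theorem stmt7_general (D : ℕ) (x : Fin D → ℂ) (hx : ∀ i j, x i * x j ≠ 1) :
    Matrix.det (Matrix.of fun i j : Fin D => 1 / (1 - x i * x j)) =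
      (∏ i : Fin D, ∏ j ∈ Finset.univ.filter (fun j => j < i), (x i - x j) ^ 2) /
        (∏ i : Fin D, ∏ j : Fin D, (1 - x i * x j)) := by
  simpa only [sq] using det_one_div_one_sub_mul x x hx

/-- Cauchy-type determinant: for `x_1, …, x_D` with `x_i x_j ≠ 1`, the matrix
`C_{ij} = 1/(1 − x_i x_j)` has determinant
`(∏_{j<i} (x_i − x_j)²) / (∏_{i,j} (1 − x_i x_j))`. -/
theorem stmt7 (D : ℕ) (hD : 1 ≤ D) (x : Fin D → ℂ) (hx : ∀ i j, x i * x j ≠ 1) :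
    Matrix.det (Matrix.of fun i j : Fin D => 1 / (1 - x i * x j)) =
      (∏ i : Fin D, ∏ j ∈ Finset.univ.filter (fun j => j < i), (x i - x j) ^ 2) /
        (∏ i : Fin D, ∏ j : Fin D, (1 - x i * x j)) :=
  stmt7_general D x hx
end

section
/- Let D ≥ 1 be a natural number and x_1, …, x_D complex numbers such that x_i x_j ≠ 1 for all i, j. Then the D × D matrix Z with entries Z_{ij} = (1 − x_i²)/(1 − x_i x_j) satisfies det Z = ∏_{1 ≤ j < i ≤ D} ((x_i − x_j)/(1 − x_i x_j))². -/
open Finset Polynomial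

namespace Stmt8Aux

variable {D : ℕ} (x : Fin D → ℂ)

noncomputable def E : ℂ[X] := ∏ k : Fin D, (1 - C (x k) * X)

noncomputable def P (j : Fin D) : ℂ[X] := ∏ k ∈ univ.erase j, (1 - C (x k) * X)

lemma E_eq (j : Fin D) : E x = (1 - C (x j) * X) * P x j := by
  rw [E, P, ← Finset.mul_prod_erase _ _ (mem_univ j)]

lemma coeff_E_zero : (E x).coeff 0 = 1 := by
  rw [Polynomial.coeff_zero_eq_eval_zero, E]
  simp [Polynomial.eval_prod]

lemma coeff_P (j : Fin D) (m : ℕ) :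
    (P x j).coeff m = ∑ s ∈ Finset.range (m + 1), (E x).coeff s * x j ^ (m - s) := by
  induction m with
  | zero =>
    have h0 : (P x j).coeff 0 = 1 := by
      rw [Polynomial.coeff_zero_eq_eval_zero, P]
      simp [Polynomial.eval_prod]
    simp [h0, coeff_E_zero]
  | succ m ih =>
    have hc : (E x).coeff (m + 1) = (P x j).coeff (m + 1) - x j * (P x j).coeff m := by
      rw [E_eq x j, sub_mul, one_mul, mul_assoc, Polynomial.coeff_sub, Polynomial.coeff_C_mul,
        Polynomial.coeff_X_mul]
    have hP : (P x j).coeff (m + 1) = (E x).coeff (m + 1) + x j * (P x j).coeff m := by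
      rw [hc]; ring
    rw [hP, ih, Finset.mul_sum]
    conv_rhs => rw [Finset.sum_range_succ]
    rw [Nat.sub_self, pow_zero, mul_one, add_comm]
    congr 1
    refine Finset.sum_congr rfl fun s hs => ?_
    have hsm : s ≤ m := Nat.lt_succ_iff.mp (Finset.mem_range.mp hs)
    have h1 : m + 1 - s = (m - s) + 1 := by omega
    rw [h1, pow_succ]
    ring

lemma natDegree_P_lt (j : Fin D) : (P x j).natDegree < D := by
  have h1 : ∀ k ∈ univ.erase j, (1 - C (x k) * X).natDegree ≤ 1 := by
    intro k _
    refine le_trans (Polynomial.natDegree_sub_le _ _) ?_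
    simp only [Polynomial.natDegree_one, max_le_iff]
    exact ⟨Nat.zero_le _, le_trans (Polynomial.natDegree_mul_le)
      (by simp [Polynomial.natDegree_C, Polynomial.natDegree_X])⟩
  have h2 := Polynomial.natDegree_prod_le (univ.erase j) (fun k => 1 - C (x k) * X)
  have h3 : ∑ k ∈ univ.erase j, ((1 - C (x k) * X).natDegree) ≤ ∑ k ∈ univ.erase j, 1 :=
    Finset.sum_le_sum h1
  have h4 : (univ.erase j).card = D - 1 := by
    rw [Finset.card_erase_of_mem (mem_univ j), Finset.card_univ, Fintype.card_fin]
  have hD : 1 ≤ D := Nat.one_le_iff_ne_zero.mpr fun h => (h ▸ j).elim0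
  calc (P x j).natDegree ≤ _ := h2
    _ ≤ ∑ k ∈ univ.erase j, 1 := h3
    _ = D - 1 := by rw [Finset.sum_const, smul_eq_mul, mul_one, h4]
    _ < D := by omega

lemma prod_swap {M : Type*} [CommMonoid M] (f : Fin D → Fin D → M) :
    ∏ i, ∏ j ∈ Iio i, f i j = ∏ i, ∏ j ∈ Ioi i, f j i := by
  rw [Finset.prod_sigma', Finset.prod_sigma']
  refine Finset.prod_nbij' (fun p => ⟨p.2, p.1⟩) (fun p => ⟨p.2, p.1⟩) ?_ ?_ ?_ ?_ ?_ <;> simp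

lemma key_det :
    Matrix.det (Matrix.of fun i j : Fin D => ∏ k ∈ univ.erase j, (1 - x i * x k)) =
      (Matrix.det (Matrix.vandermonde x)) ^ 2 := by
  classical
  set L : Matrix (Fin D) (Fin D) ℂ :=
    Matrix.of fun m s : Fin D => if (s : ℕ) ≤ (m : ℕ) then (E x).coeff ((m : ℕ) - (s : ℕ)) else 0
    with hLdef
  have hN : (Matrix.of fun m j : Fin D => (P x j).coeff m) = L * (Matrix.vandermonde x).transpose := by
    ext m j
    rw [Matrix.mul_apply, Matrix.of_apply, coeff_P]
    have step1 : ∑ s ∈ Finset.range ((m : ℕ) + 1), (E x).coeff s * x j ^ ((m : ℕ) - s) =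
        ∑ s ∈ Finset.range ((m : ℕ) + 1), (E x).coeff ((m : ℕ) - s) * x j ^ s := by
      rw [← Finset.sum_range_reflect]
      refine Finset.sum_congr rfl fun s hs => ?_
      have : s ≤ (m : ℕ) := Nat.lt_succ_iff.mp (Finset.mem_range.mp hs)
      congr 2 <;> omega
    rw [step1]
    have step2 : ∑ s ∈ Finset.range ((m : ℕ) + 1), (E x).coeff ((m : ℕ) - s) * x j ^ s =
        ∑ s ∈ Finset.range D,
          (if s ≤ (m : ℕ) then (E x).coeff ((m : ℕ) - s) * x j ^ s else 0) := by
      rw [← Finset.sum_subset (Finset.range_subset_range.mpr (Nat.succ_le_of_lt m.isLt))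
        (fun s _ hs => if_neg (by simpa [Nat.lt_succ_iff] using hs))]
      refine Finset.sum_congr rfl fun s hs => ?_
      rw [if_pos (Nat.lt_succ_iff.mp (Finset.mem_range.mp hs))]
    rw [step2, ← Fin.sum_univ_eq_sum_range
      (fun s => if s ≤ (m : ℕ) then (E x).coeff ((m : ℕ) - s) * x j ^ s else 0) D]
    refine Finset.sum_congr rfl fun s _ => ?_
    rw [hLdef, Matrix.of_apply, Matrix.transpose_apply, Matrix.vandermonde_apply]
    split <;> simp
  have hDm : (Matrix.of fun i j : Fin D => ∏ k ∈ univ.erase j, (1 - x i * x k)) =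
      Matrix.vandermonde x * Matrix.of (fun m j : Fin D => (P x j).coeff m) := by
    ext i j
    rw [Matrix.mul_apply, Matrix.of_apply]
    have hev : ∏ k ∈ univ.erase j, (1 - x i * x k) = (P x j).eval (x i) := by
      rw [P, Polynomial.eval_prod]
      refine Finset.prod_congr rfl fun k _ => ?_
      simp only [Polynomial.eval_sub, Polynomial.eval_one, Polynomial.eval_mul,
        Polynomial.eval_C, Polynomial.eval_X]
      ring
    rw [hev, Polynomial.eval_eq_sum_range' (natDegree_P_lt x j),
      ← Fin.sum_univ_eq_sum_range (fun m => (P x j).coeff m * x i ^ m) D]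
    refine Finset.sum_congr rfl fun m _ => ?_
    rw [Matrix.vandermonde_apply, Matrix.of_apply, mul_comm]
  have hL : Matrix.det L = 1 := by
    rw [Matrix.det_of_lowerTriangular L]
    · refine Finset.prod_eq_one fun i _ => ?_
      rw [hLdef, Matrix.of_apply, if_pos le_rfl, Nat.sub_self, coeff_E_zero]
    · intro i j hij
      have h : (i : ℕ) < (j : ℕ) := hij
      rw [hLdef, Matrix.of_apply, if_neg (not_le.mpr h)]
  rw [hDm, hN, Matrix.det_mul, Matrix.det_mul, hL, one_mul, Matrix.det_transpose, sq]

end Stmt8Aux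

/-- For `x_1, …, x_D` with `x_i x_j ≠ 1`, the matrix
`Z_{ij} = (1 − x_i²)/(1 − x_i x_j)` has determinant
`∏_{j<i} ((x_i − x_j)/(1 − x_i x_j))²`. -/
theorem stmt8 (D : ℕ) (hD : 1 ≤ D) (x : Fin D → ℂ) (hx : ∀ i j, x i * x j ≠ 1) :
    Matrix.det (Matrix.of fun i j : Fin D => (1 - x i ^ 2) / (1 - x i * x j)) =
      ∏ i : Fin D, ∏ j ∈ Finset.univ.filter (fun j => j < i),
        ((x i - x j) / (1 - x i * x j)) ^ 2 := by
  classical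
  have hne : ∀ i j, (1 : ℂ) - x i * x j ≠ 0 := fun i j h => hx i j ((sub_eq_zero.mp h).symm)
  have hsq : ∀ i, (1 : ℂ) - x i ^ 2 ≠ 0 := fun i => by rw [sq]; exact hne i i
  have hZ : (Matrix.of fun i j : Fin D => (1 - x i ^ 2) / (1 - x i * x j)) =
      Matrix.of fun i j : Fin D =>
        ((1 - x i ^ 2) * (∏ k, (1 - x i * x k))⁻¹) *
          (Matrix.of fun i j : Fin D => ∏ k ∈ univ.erase j, (1 - x i * x k)) i j := by
    ext i j
    simp only [Matrix.of_apply]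
    rw [← Finset.mul_prod_erase (univ : Finset (Fin D)) (fun k => 1 - x i * x k)
      (Finset.mem_univ j)]
    have h1 := hne i j
    have h2 : (∏ k ∈ univ.erase j, (1 - x i * x k)) ≠ 0 :=
      Finset.prod_ne_zero_iff.mpr fun k _ => hne i k
    field_simp
  rw [hZ, Matrix.det_mul_column (fun i => (1 - x i ^ 2) * (∏ k, (1 - x i * x k))⁻¹)
    (Matrix.of fun i j : Fin D => ∏ k ∈ univ.erase j, (1 - x i * x k)),
    Stmt8Aux.key_det, Matrix.det_vandermonde]
  -- rewrite the filter as Iio and swap to Ioi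
  have hfil : ∀ i : Fin D, univ.filter (fun j => j < i) = Iio i := fun i => by ext; simp
  rw [show (∏ i : Fin D, ∏ j ∈ univ.filter (fun j => j < i),
        ((x i - x j) / (1 - x i * x j)) ^ 2)
      = ∏ i : Fin D, ∏ j ∈ Iio i, ((x i - x j) / (1 - x i * x j)) ^ 2 from
        Finset.prod_congr rfl fun i _ => by rw [hfil i],
    Stmt8Aux.prod_swap (fun i j => ((x i - x j) / (1 - x i * x j)) ^ 2)]
  -- decompose the full product of (1 - x i x k)
  have hdec : ∏ i, ∏ k, (1 - x i * x k) =
      (∏ i, (1 - x i ^ 2)) * (∏ i, ∏ j ∈ Ioi i, (1 - x j * x i)) ^ 2 := by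
    have h1 : ∀ i : Fin D, ∏ k, (1 - x i * x k) =
        (1 - x i ^ 2) * ((∏ j ∈ Ioi i, (1 - x i * x j)) * ∏ j ∈ Iio i, (1 - x i * x j)) := by
      intro i
      rw [← Finset.mul_prod_erase (univ : Finset (Fin D)) (fun k => 1 - x i * x k)
        (Finset.mem_univ i)]
      have hsplit : ((univ : Finset (Fin D)).erase i) = (Ioi i) ∪ (Iio i) := by
        ext k
        simp only [Finset.mem_erase, Finset.mem_univ, and_true, Finset.mem_union,
          Finset.mem_Ioi, Finset.mem_Iio]
        exact ⟨fun h => (h.lt_or_gt).symm, fun h => h.elim ne_of_gt ne_of_lt⟩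
      rw [hsplit, Finset.prod_union (Finset.disjoint_Ioi_Iio i), sq]
    rw [Finset.prod_congr rfl fun i _ => h1 i, Finset.prod_mul_distrib,
      Finset.prod_mul_distrib]
    congr 1
    rw [Stmt8Aux.prod_swap (fun i j => 1 - x i * x j), sq]
    congr 1
    exact Finset.prod_congr rfl fun i _ => Finset.prod_congr rfl fun j _ => by ring
  have hQ : (∏ i, ∏ j ∈ Ioi i, (1 - x j * x i)) ≠ 0 :=
    Finset.prod_ne_zero_iff.mpr fun i _ =>
      Finset.prod_ne_zero_iff.mpr fun j _ => hne j i
  have hA : (∏ i, (1 - x i ^ 2)) ≠ 0 := Finset.prod_ne_zero_iff.mpr fun i _ => hsq i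
  rw [Finset.prod_mul_distrib, Finset.prod_inv_distrib, hdec]
  simp only [div_pow]
  rw [Finset.prod_congr rfl fun i (_ : i ∈ (univ : Finset (Fin D))) =>
    (Finset.prod_div_distrib (s := Ioi i)
      (f := fun j => (x j - x i) ^ 2) (g := fun j => (1 - x j * x i) ^ 2)),
    Finset.prod_div_distrib]
  rw [Finset.prod_congr rfl fun i (_ : i ∈ (univ : Finset (Fin D))) =>
      (Finset.prod_pow (Ioi i) 2 (fun j => x j - x i)),
    Finset.prod_congr rfl fun i (_ : i ∈ (univ : Finset (Fin D))) =>
      (Finset.prod_pow (Ioi i) 2 (fun j => 1 - x j * x i)),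
    Finset.prod_pow, Finset.prod_pow]
  field_simp
end

section
/- Let m > 0 be a real number and let p, r be natural numbers. Define x(n) = (−1)^n · e^{iπ(n + 1/2)/m} for a natural number n. If sin(π((m+1)(p+r) + 1)/(2m)) ≠ 0, then 1 − x(p)x(r) ≠ 0 and ((x(p) − x(r))/(1 − x(p)x(r)))² = sin²(π(m+1)(p−r)/(2m)) / sin²(π((m+1)(p+r) + 1)/(2m)). -/
open Complex
/-- With `x(n) = (−1)^n e^{iπ(n+1/2)/m}`: if `sin(π((m+1)(p+r)+1)/(2m)) ≠ 0`, then
`1 − x(p)x(r) ≠ 0` and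
`((x(p) − x(r))/(1 − x(p)x(r)))² = sin²(π(m+1)(p−r)/(2m)) / sin²(π((m+1)(p+r)+1)/(2m))`. -/
theorem stmt9 (m : ℝ) (hm : 0 < m) (p r : ℕ)
    (x : ℕ → ℂ)
    (hx : ∀ n : ℕ, x n =
      (-1 : ℂ) ^ n * Complex.exp (((Real.pi * ((n : ℝ) + 1 / 2) / m : ℝ) : ℂ) * Complex.I))
    (hsin : Real.sin (Real.pi * ((m + 1) * ((p : ℝ) + (r : ℝ)) + 1) / (2 * m)) ≠ 0) :
    1 - x p * x r ≠ 0 ∧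
      ((x p - x r) / (1 - x p * x r)) ^ 2 =
        ((Real.sin (Real.pi * (m + 1) * ((p : ℝ) - (r : ℝ)) / (2 * m)) ^ 2 /
            Real.sin (Real.pi * ((m + 1) * ((p : ℝ) + (r : ℝ)) + 1) / (2 * m)) ^ 2 : ℝ) : ℂ) := by
  have hm' : m ≠ 0 := ne_of_gt hm
  have hmc : (m : ℂ) ≠ 0 := Complex.ofReal_ne_zero.mpr hm'
  set d : ℝ := Real.pi * (m + 1) * ((p : ℝ) - (r : ℝ)) / (2 * m) with hd
  set s : ℝ := Real.pi * ((m + 1) * ((p : ℝ) + (r : ℝ)) + 1) / (2 * m) with hs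
  have hxn : ∀ n : ℕ, x n =
      Complex.exp (((Real.pi * ((m + 1) * (n : ℝ) + 1 / 2) / m : ℝ) : ℂ) * Complex.I) := by
    intro n
    rw [hx]
    have h1 : ((-1 : ℂ)) ^ n = Complex.exp ((n : ℂ) * ((Real.pi : ℂ) * Complex.I)) := by
      rw [Complex.exp_nat_mul, Complex.exp_pi_mul_I]
    rw [h1, ← Complex.exp_add]
    congr 1
    push_cast
    field_simp
    ring
  have hxp : x p = Complex.exp (((s + d : ℝ) : ℂ) * Complex.I) := by
    rw [hxn p]
    congr 2
    rw [hd, hs]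
    push_cast
    field_simp
    ring
  have hxr : x r = Complex.exp (((s - d : ℝ) : ℂ) * Complex.I) := by
    rw [hxn r]
    congr 2
    rw [hd, hs]
    push_cast
    field_simp
    ring
  set A : ℂ := Complex.exp ((s : ℂ) * Complex.I) with hA
  set B : ℂ := Complex.exp ((d : ℂ) * Complex.I) with hB
  have hAne : A ≠ 0 := Complex.exp_ne_zero _
  have hBne : B ≠ 0 := Complex.exp_ne_zero _
  have hxp' : x p = A * B := by
    rw [hxp, hA, hB, ← Complex.exp_add]; push_cast; ring_nf
  have hxr' : x r = A * B⁻¹ := by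
    rw [hxr, hA, hB, ← Complex.exp_neg, ← Complex.exp_add]; push_cast; ring_nf
  have hsinA : Complex.sin (s : ℂ) = (A⁻¹ - A) * Complex.I / 2 := by
    rw [Complex.sin, hA, neg_mul, Complex.exp_neg]
  have hsinB : Complex.sin (d : ℂ) = (B⁻¹ - B) * Complex.I / 2 := by
    rw [Complex.sin, hB, neg_mul, Complex.exp_neg]
  have hsS : Complex.sin (s : ℂ) ≠ 0 := by
    rw [← Complex.ofReal_sin]
    exact_mod_cast Complex.ofReal_ne_zero.mpr hsin
  have h1 : 1 - x p * x r = -2 * Complex.I * A * Complex.sin (s : ℂ) := by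
    rw [hxp', hxr', hsinA]
    field_simp
    ring_nf
    rw [Complex.I_sq]
    ring
  have h2 : x p - x r = 2 * Complex.I * A * Complex.sin (d : ℂ) := by
    rw [hxp', hxr', hsinB]
    field_simp
    ring_nf
    rw [Complex.I_sq]
    ring
  have hden : 1 - x p * x r ≠ 0 := by
    rw [h1]
    exact mul_ne_zero (mul_ne_zero (mul_ne_zero (by norm_num) Complex.I_ne_zero) hAne) hsS
  refine ⟨hden, ?_⟩
  have hratio : (x p - x r) / (1 - x p * x r) = -(Complex.sin (d : ℂ) / Complex.sin (s : ℂ)) := by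
    rw [h1, h2]
    field_simp
  rw [hratio, neg_sq, div_pow, ← Complex.ofReal_sin, ← Complex.ofReal_sin]
  push_cast
  ring
end

section
/- Let m > 1 be a real number and let n_1 < n_2 < … < n_D be strictly increasing natural numbers with n_D ≤ (m−1)/2. Set μ = e^{iπ/m} and κ_{m,l} = −1/((−1)^l μ^{l+1} − 1) for natural l. Then for all i, j ∈ {1,…,D} the quantity (−1)^{n_i+n_j} μ^{n_i+n_j+1} ≠ 1 (so κ_{m,n_i+n_j} is well defined), and the D × D matrix Z with entries Z_{ij} = κ_{m, n_i+n_j} / κ_{m, 2n_i} satisfies det Z = ∏_{1 ≤ j < i ≤ D} sin²(π(m+1)(n_i−n_j)/(2m)) / sin²(π((m+1)(n_i+n_j) + 1)/(2m)); moreover this determinant is a strictly positive real number. -/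
open Complex Finset

/-- `μ = e^{iπ/m}`. -/
noncomputable def mu (m : ℝ) : ℂ := Complex.exp (((Real.pi / m : ℝ) : ℂ) * Complex.I)

/-- `κ_{m,l} = −1/((−1)^l μ^{l+1} − 1)`. -/
noncomputable def kappa (m : ℝ) (l : ℕ) : ℂ := -1 / ((-1 : ℂ) ^ l * mu m ^ (l + 1) - 1)

/-- auxiliary: `X_p = (−1)^p μ^p`. -/
noncomputable def Xc (m : ℝ) (p : ℕ) : ℂ := (-1 : ℂ) ^ p * mu m ^ p

/-- auxiliary: `t_k = πk(m+1)/m`. -/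
noncomputable def tR (m : ℝ) (k : ℕ) : ℝ := Real.pi * k * (m + 1) / m

theorem my_exp_sub_exp (α β : ℝ) :
    Complex.exp ((α:ℂ) * I) - Complex.exp ((β:ℂ) * I)
      = Complex.exp ((((α + β)/2 : ℝ) : ℂ) * I) *
          (2 * I * ((Real.sin ((α - β)/2) : ℝ) : ℂ)) := by
  have h1 : (α:ℂ) * I = (((α+β)/2 : ℝ):ℂ) * I + (((α-β)/2 : ℝ):ℂ) * I := by
    push_cast; ring
  have h2 : (β:ℂ) * I = (((α+β)/2 : ℝ):ℂ) * I + (-(((α-β)/2 : ℝ):ℂ)) * I := by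
    push_cast; ring
  rw [h1, h2, Complex.exp_add, Complex.exp_add]
  rw [Complex.exp_mul_I, Complex.exp_mul_I, Complex.exp_mul_I, Complex.cos_neg,
    Complex.sin_neg, Complex.ofReal_sin]
  ring

theorem Xc_exp (m : ℝ) (hm : m ≠ 0) (p : ℕ) :
    Xc m p = Complex.exp (((tR m p : ℝ) : ℂ) * I) := by
  rw [Xc, tR, mu, ← Complex.exp_pi_mul_I, ← Complex.exp_nat_mul, ← Complex.exp_nat_mul,
    ← Complex.exp_add]
  congr 1
  have hm' : (m:ℂ) ≠ 0 := Complex.ofReal_ne_zero.mpr hm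
  push_cast
  field_simp

theorem Xc_ne (m : ℝ) (p : ℕ) : Xc m p ≠ 0 := by
  rw [Xc]
  exact mul_ne_zero (pow_ne_zero _ (by norm_num)) (pow_ne_zero _ (Complex.exp_ne_zero _))

theorem argA_eq (m : ℝ) (hm : m ≠ 0) (p q : ℕ) :
    (tR m p - tR m q) / 2 = Real.pi * (m + 1) * ((p:ℝ) - (q:ℝ)) / (2 * m) := by
  rw [tR, tR]; field_simp

theorem argB_eq (m : ℝ) (hm : m ≠ 0) (p q : ℕ) :
    (tR m p + tR m q + Real.pi / m) / 2
      = Real.pi * ((m + 1) * ((p:ℝ) + (q:ℝ)) + 1) / (2 * m) := by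
  rw [tR, tR]; field_simp

theorem num_eq (m : ℝ) (hm : m ≠ 0) (p q : ℕ) :
    Xc m p - Xc m q
      = Complex.exp ((((tR m p + tR m q)/2 : ℝ) : ℂ) * I) *
          (2 * I * ((Real.sin (Real.pi * (m + 1) * ((p:ℝ) - (q:ℝ)) / (2 * m)) : ℝ) : ℂ)) := by
  rw [Xc_exp m hm, Xc_exp m hm, my_exp_sub_exp, ← argA_eq m hm p q]

theorem nu_eq (m : ℝ) : (mu m)⁻¹ = Complex.exp (((-(Real.pi / m) : ℝ) : ℂ) * I) := by
  rw [mu, ← Complex.exp_neg]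
  congr 1
  push_cast
  ring

theorem d_eq (m : ℝ) (hm : m ≠ 0) (p q : ℕ) :
    Xc m p * Xc m q - (mu m)⁻¹
      = Complex.exp ((((tR m p + tR m q + -(Real.pi/m))/2 : ℝ) : ℂ) * I) *
          (2 * I * ((Real.sin (Real.pi * ((m + 1) * ((p:ℝ) + (q:ℝ)) + 1) / (2 * m)) : ℝ) : ℂ)) := by
  have hXX : Xc m p * Xc m q = Complex.exp (((tR m p + tR m q : ℝ) : ℂ) * I) := by
    rw [Xc_exp m hm, Xc_exp m hm, ← Complex.exp_add]
    congr 1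
    push_cast
    ring
  rw [hXX, nu_eq, my_exp_sub_exp (tR m p + tR m q) (-(Real.pi/m))]
  have h1 : (tR m p + tR m q - -(Real.pi/m))/2
      = Real.pi * ((m + 1) * ((p:ℝ) + (q:ℝ)) + 1) / (2 * m) := by
    rw [← argB_eq m hm p q]; ring_nf
  rw [h1]

theorem d_ne (m : ℝ) (hm : m ≠ 0) (p q : ℕ)
    (hB : Real.sin (Real.pi * ((m + 1) * ((p:ℝ) + (q:ℝ)) + 1) / (2 * m)) ≠ 0) :
    Xc m p * Xc m q - (mu m)⁻¹ ≠ 0 := by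
  rw [d_eq m hm p q]
  exact mul_ne_zero (Complex.exp_ne_zero _)
    (mul_ne_zero (mul_ne_zero two_ne_zero Complex.I_ne_zero) (Complex.ofReal_ne_zero.mpr hB))

theorem pair_eq (m : ℝ) (hm : m ≠ 0) (p q : ℕ)
    (hB : Real.sin (Real.pi * ((m + 1) * ((p:ℝ) + (q:ℝ)) + 1) / (2 * m)) ≠ 0) :
    (mu m)⁻¹ * (Xc m p - Xc m q)^2 / (Xc m p * Xc m q - (mu m)⁻¹)^2
      = ((Real.sin (Real.pi * (m + 1) * ((p:ℝ) - (q:ℝ)) / (2 * m)) ^ 2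
          / Real.sin (Real.pi * ((m + 1) * ((p:ℝ) + (q:ℝ)) + 1) / (2 * m)) ^ 2 : ℝ) : ℂ) := by
  set sA := Real.sin (Real.pi * (m + 1) * ((p:ℝ) - (q:ℝ)) / (2 * m)) with hsA
  set sB := Real.sin (Real.pi * ((m + 1) * ((p:ℝ) + (q:ℝ)) + 1) / (2 * m)) with hsB
  set EA := Complex.exp ((((tR m p + tR m q)/2 : ℝ) : ℂ) * I) with hEA
  set EB := Complex.exp ((((tR m p + tR m q + -(Real.pi/m))/2 : ℝ) : ℂ) * I) with hEB
  set e := Complex.exp (((-(Real.pi / m) : ℝ) : ℂ) * I) with he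
  rw [num_eq m hm p q, d_eq m hm p q, nu_eq]
  rw [← hsA, ← hsB, ← hEA, ← hEB, ← he]
  have hEE : e * EA ^ 2 = EB ^ 2 := by
    rw [he, hEA, hEB, sq, sq, ← Complex.exp_add, ← Complex.exp_add, ← Complex.exp_add]
    congr 1
    push_cast
    ring
  have hsBne : (sB : ℂ) ≠ 0 := Complex.ofReal_ne_zero.mpr hB
  have h2I : (2 * I : ℂ) ≠ 0 := mul_ne_zero two_ne_zero Complex.I_ne_zero
  have hEBne : EB ≠ 0 := Complex.exp_ne_zero _
  have hd1 : (EB * (2 * I * (sB:ℂ)))^2 ≠ 0 :=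
    pow_ne_zero _ (mul_ne_zero hEBne (mul_ne_zero h2I hsBne))
  have hd2 : ((EB * (2 * I))^2 * (sB:ℂ)^2) ≠ 0 :=
    mul_ne_zero (pow_ne_zero _ (mul_ne_zero hEBne h2I)) (pow_ne_zero _ hsBne)
  have h1 : e * (EA * (2 * I * (sA:ℂ)))^2 / (EB * (2 * I * (sB:ℂ)))^2
      = ((EB * (2 * I))^2 * (sA:ℂ)^2) / ((EB * (2 * I))^2 * (sB:ℂ)^2) := by
    rw [div_eq_div_iff hd1 hd2]
    linear_combination ((2 * I * (sA:ℂ))^2 * (EB * (2 * I))^2 * (sB:ℂ)^2) * hEE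
  rw [h1, mul_div_mul_left _ _ (pow_ne_zero _ (mul_ne_zero hEBne h2I))]
  push_cast
  ring

theorem my_sin_ne1 (u : ℕ) (t : ℝ) (h0 : 0 < t) (h1 : t ≤ 1/2) :
    Real.sin (Real.pi * (u + t)) ≠ 0 := by
  intro hs
  rw [Real.sin_eq_zero_iff] at hs
  obtain ⟨z, hz⟩ := hs
  have hpi := Real.pi_ne_zero
  have : (z : ℝ) = u + t := by
    have hz' : Real.pi * (z:ℝ) = Real.pi * ((u:ℝ) + t) := by linarith
    exact mul_left_cancel₀ hpi hz'
  have ht : t = (z - u : ℤ) := by push_cast; linarith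
  have h0' : (0:ℤ) < z - u := by
    have : (0:ℝ) < ((z - u : ℤ) : ℝ) := by rw [← ht]; exact h0
    exact_mod_cast this
  have h1' : ((z - u : ℤ) : ℝ) ≤ 1/2 := by rw [← ht]; exact h1
  have : (1:ℝ) ≤ ((z - u : ℤ) : ℝ) := by exact_mod_cast h0'
  linarith

theorem my_sin_ne2 (u : ℕ) (t : ℝ) (h0 : 0 < t) (h1 : t < 1/2) :
    Real.sin (Real.pi * (u + 1/2 + t)) ≠ 0 := by
  intro hs
  rw [Real.sin_eq_zero_iff] at hs
  obtain ⟨z, hz⟩ := hs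
  have hpi := Real.pi_ne_zero
  have : (z : ℝ) = u + 1/2 + t := by
    have hz' : Real.pi * (z:ℝ) = Real.pi * ((u:ℝ) + 1/2 + t) := by linarith
    exact mul_left_cancel₀ hpi hz'
  have ht : t + 1/2 = (z - u : ℤ) := by push_cast; linarith
  have h0' : (0:ℤ) < z - u := by
    have : (0:ℝ) < ((z - u : ℤ) : ℝ) := by rw [← ht]; linarith
    exact_mod_cast this
  have : (1:ℝ) ≤ ((z - u : ℤ) : ℝ) := by exact_mod_cast h0'
  rw [← ht] at this
  linarith

theorem sinB_ne (m : ℝ) (hm : 1 < m) (p q : ℕ)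
    (hp : (p:ℝ) ≤ (m - 1)/2) (hq : (q:ℝ) ≤ (m - 1)/2) :
    Real.sin (Real.pi * ((m + 1) * ((p:ℝ) + (q:ℝ)) + 1) / (2 * m)) ≠ 0 := by
  have hm0 : (0:ℝ) < m := by linarith
  have hadd : (p:ℝ) + (q:ℝ) ≤ m - 1 := by linarith
  rcases Nat.even_or_odd (p + q) with ⟨u, hu⟩ | ⟨u, hu⟩
  · have h2 : (p:ℝ) + (q:ℝ) = 2 * u := by
      have h3 : ((p + q : ℕ):ℝ) = ((u + u : ℕ):ℝ) := by rw [hu]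
      push_cast at h3
      linarith
    have harg : Real.pi * ((m + 1) * ((p:ℝ) + (q:ℝ)) + 1) / (2 * m)
        = Real.pi * ((u:ℝ) + ((p:ℝ) + (q:ℝ) + 1)/(2*m)) := by
      rw [h2]
      field_simp [Real.pi_ne_zero]
      ring
    rw [harg]
    apply my_sin_ne1
    · positivity
    · rw [div_le_iff₀ (by linarith : (0:ℝ) < 2*m)]
      linarith
  · have hpq : p ≠ q := by omega
    have hslt : (p:ℝ) + (q:ℝ) ≤ m - 2 := by
      rcases Nat.lt_or_ge p q with hlt | hge
      · have h1 : (p:ℝ) + 1 ≤ (q:ℝ) := by exact_mod_cast Nat.succ_le_of_lt hlt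
        linarith
      · have hlt : q < p := lt_of_le_of_ne hge (Ne.symm hpq)
        have h1 : (q:ℝ) + 1 ≤ (p:ℝ) := by exact_mod_cast Nat.succ_le_of_lt hlt
        linarith
    have h2 : (p:ℝ) + (q:ℝ) = 2 * u + 1 := by
      have h3 : ((p + q : ℕ):ℝ) = ((2 * u + 1 : ℕ):ℝ) := by rw [hu]
      push_cast at h3
      linarith
    have harg : Real.pi * ((m + 1) * ((p:ℝ) + (q:ℝ)) + 1) / (2 * m)
        = Real.pi * ((u:ℝ) + 1/2 + ((p:ℝ) + (q:ℝ) + 1)/(2*m)) := by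
      rw [h2]
      field_simp [Real.pi_ne_zero]
      ring
    rw [harg]
    apply my_sin_ne2
    · positivity
    · rw [div_lt_iff₀ (by linarith : (0:ℝ) < 2*m)]
      linarith

theorem sinA_ne (m : ℝ) (hm : 1 < m) (p q : ℕ) (hqp : q < p)
    (hp : (p:ℝ) ≤ (m - 1)/2) :
    Real.sin (Real.pi * (m + 1) * ((p:ℝ) - (q:ℝ)) / (2 * m)) ≠ 0 := by
  have hm0 : (0:ℝ) < m := by linarith
  set k : ℕ := p - q with hkdef
  have hkk : (k:ℝ) = (p:ℝ) - (q:ℝ) := by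
    rw [hkdef]; push_cast [Nat.cast_sub (le_of_lt hqp)]; ring
  have hk1 : 1 ≤ k := by omega
  have hkle : (k:ℝ) ≤ (m - 1)/2 := by
    have : (k:ℝ) ≤ (p:ℝ) := by rw [hkk]; have : (0:ℝ) ≤ (q:ℝ) := Nat.cast_nonneg q; linarith
    linarith
  have hklt : (k:ℝ) < m := by nlinarith
  have hkpos : (0:ℝ) < (k:ℝ) := by exact_mod_cast hk1
  rcases Nat.even_or_odd k with ⟨u, hu⟩ | ⟨u, hu⟩
  · have harg : Real.pi * (m + 1) * ((p:ℝ) - (q:ℝ)) / (2 * m)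
        = Real.pi * ((u:ℝ) + (k:ℝ)/(2*m)) := by
      have h2 : (k:ℝ) = 2 * u := by rw [hu]; push_cast; ring
      rw [← hkk, h2]
      field_simp [Real.pi_ne_zero]
    rw [harg]
    apply my_sin_ne1
    · positivity
    · rw [div_le_iff₀ (by linarith : (0:ℝ) < 2*m)]
      linarith
  · have harg : Real.pi * (m + 1) * ((p:ℝ) - (q:ℝ)) / (2 * m)
        = Real.pi * ((u:ℝ) + 1/2 + (k:ℝ)/(2*m)) := by
      have h2 : (k:ℝ) = 2 * u + 1 := by rw [hu]; push_cast; ring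
      rw [← hkk, h2]
      field_simp [Real.pi_ne_zero]
    rw [harg]
    apply my_sin_ne2
    · positivity
    · rw [div_lt_iff₀ (by linarith : (0:ℝ) < 2*m)]
      linarith

theorem mu_ne (m : ℝ) : mu m ≠ 0 := Complex.exp_ne_zero _

theorem denom_expand (m : ℝ) (p q : ℕ) :
    (-1:ℂ)^(p+q) * mu m^(p+q+1) - 1 = mu m * (Xc m p * Xc m q - (mu m)⁻¹) := by
  have hμ := mu_ne m
  rw [Xc, Xc, pow_add (-1:ℂ), pow_succ (mu m) (p+q), pow_add (mu m)]
  field_simp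

theorem ab_eq (m : ℝ) (p q : ℕ) :
    Xc m p + -(mu m)⁻¹ * (Xc m q)⁻¹ = (Xc m p * Xc m q - (mu m)⁻¹) * (Xc m q)⁻¹ := by
  have hXq := Xc_ne m q
  rw [sub_mul, mul_assoc, mul_inv_cancel₀ hXq, mul_one]
  ring

theorem neg_one_div_div (A B : ℂ) (hA : A ≠ 0) (hB : B ≠ 0) :
    (-1/A)/(-1/B) = B/A := by
  field_simp

theorem entry_eq (m : ℝ) (p q : ℕ)
    (hdpq : Xc m p * Xc m q - (mu m)⁻¹ ≠ 0)
    (hdpp : Xc m p * Xc m p - (mu m)⁻¹ ≠ 0) :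
    kappa m (p + q) / kappa m (2 * p)
      = (Xc m p * Xc m p - (mu m)⁻¹) *
          ((Xc m q)⁻¹ * (Xc m p + -(mu m)⁻¹ * (Xc m q)⁻¹)⁻¹) := by
  have hμ := mu_ne m
  have hXq := Xc_ne m q
  have hXp := Xc_ne m p
  rw [kappa, kappa, show 2 * p = p + p from two_mul p, denom_expand, denom_expand,
    ab_eq, mul_inv, inv_inv]
  rw [neg_one_div_div _ _ (mul_ne_zero hμ hdpq) (mul_ne_zero hμ hdpp),
    mul_div_mul_left _ _ hμ, div_eq_mul_inv,
    show (Xc m q)⁻¹ * ((Xc m p * Xc m q - (mu m)⁻¹)⁻¹ * Xc m q)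
      = (Xc m p * Xc m q - (mu m)⁻¹)⁻¹ * ((Xc m q)⁻¹ * Xc m q) from by ring,
    inv_mul_cancel₀ hXq, mul_one]

theorem pairG_eq (m : ℝ) (hm : m ≠ 0) (p q : ℕ)
    (hB : Real.sin (Real.pi * ((m + 1) * ((p:ℝ) + (q:ℝ)) + 1) / (2 * m)) ≠ 0) :
    (Xc m p - Xc m q) * (-(mu m)⁻¹ * (Xc m p)⁻¹ - -(mu m)⁻¹ * (Xc m q)⁻¹) /
      ((Xc m p + -(mu m)⁻¹ * (Xc m q)⁻¹) * (Xc m q + -(mu m)⁻¹ * (Xc m p)⁻¹))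
      = ((Real.sin (Real.pi * (m + 1) * ((p:ℝ) - (q:ℝ)) / (2 * m)) ^ 2
          / Real.sin (Real.pi * ((m + 1) * ((p:ℝ) + (q:ℝ)) + 1) / (2 * m)) ^ 2 : ℝ) : ℂ) := by
  have hμ := mu_ne m
  have hXq := Xc_ne m q
  have hXp := Xc_ne m p
  have hd := d_ne m hm p q hB
  have step : (Xc m p - Xc m q) * (-(mu m)⁻¹ * (Xc m p)⁻¹ - -(mu m)⁻¹ * (Xc m q)⁻¹) /
      ((Xc m p + -(mu m)⁻¹ * (Xc m q)⁻¹) * (Xc m q + -(mu m)⁻¹ * (Xc m p)⁻¹))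
      = (mu m)⁻¹ * (Xc m p - Xc m q)^2 / (Xc m p * Xc m q - (mu m)⁻¹)^2 := by
    rw [ab_eq m p q, ab_eq m q p]
    have hcomm : Xc m q * Xc m p - (mu m)⁻¹ = Xc m p * Xc m q - (mu m)⁻¹ := by ring
    rw [hcomm]
    have hb : (-(mu m)⁻¹ * (Xc m p)⁻¹ - -(mu m)⁻¹ * (Xc m q)⁻¹)
        = (mu m)⁻¹ * (Xc m p - Xc m q) * ((Xc m p)⁻¹ * (Xc m q)⁻¹) := by
      field_simp
      ring
    rw [hb]
    rw [show (Xc m p - Xc m q) * ((mu m)⁻¹ * (Xc m p - Xc m q) * ((Xc m p)⁻¹ * (Xc m q)⁻¹))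
        = ((Xc m p)⁻¹ * (Xc m q)⁻¹) * ((mu m)⁻¹ * (Xc m p - Xc m q)^2) from by ring,
      show (Xc m p * Xc m q - (mu m)⁻¹) * (Xc m q)⁻¹ * ((Xc m p * Xc m q - (mu m)⁻¹) * (Xc m p)⁻¹)
        = ((Xc m p)⁻¹ * (Xc m q)⁻¹) * (Xc m p * Xc m q - (mu m)⁻¹)^2 from by ring,
      mul_div_mul_left _ _ (mul_ne_zero (inv_ne_zero hXp) (inv_ne_zero hXq))]
  rw [step]
  exact pair_eq m hm p q hB


/-- Column version of `det_eq_of_forall_row_eq_smul_add_const`. -/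
theorem my_det_col_const {n : Type*} [DecidableEq n] [Fintype n] {A B : Matrix n n ℂ}
    (c : n → ℂ) (k : n) (hk : c k = 0) (h : ∀ i j, A i j = B i j + c j * B i k) :
    A.det = B.det := by
  rw [← Matrix.det_transpose A, ← Matrix.det_transpose B]
  exact Matrix.det_eq_of_forall_row_eq_smul_add_const c k hk (fun i j => h j i)

theorem my_det_cauchy : ∀ (n : ℕ) (a b : Fin n → ℂ), (∀ i j, a i + b j ≠ 0) →
    Matrix.det (Matrix.of fun i j => (a i + b j)⁻¹) =
      (∏ i, (a i + b i)⁻¹) *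
        ∏ j, ∏ i ∈ Finset.Ioi j,
          ((a i - a j) * (b i - b j) / ((a i + b j) * (a j + b i))) := by
  intro n
  induction n with
  | zero => intro a b h; simp [Matrix.det_fin_zero]
  | succ n ih =>
    intro a b h
    set C1 : Matrix (Fin (n+1)) (Fin (n+1)) ℂ :=
      Matrix.of (fun i j => if j = 0 then 1 else (a i + b j)⁻¹) with hC1
    set C3 : Matrix (Fin (n+1)) (Fin (n+1)) ℂ :=
      Matrix.of (fun i j => if j = 0 then (if i = 0 then (1:ℂ) else 0)
        else if i = 0 then 1 else (a i + b j)⁻¹) with hC3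
    -- Step A+B : det M = (∏ (a i + b 0)⁻¹) * (∏ d) * det C1
    have stepAB : Matrix.det (Matrix.of fun i j : Fin (n+1) => (a i + b j)⁻¹)
        = (∏ i, (a i + b 0)⁻¹) * ((∏ j, (if j = 0 then 1 else b 0 - b j)) * C1.det) := by
      have hA : Matrix.det (Matrix.of fun i j : Fin (n+1) => (a i + b j)⁻¹)
          = Matrix.det (Matrix.of fun i j : Fin (n+1) =>
              if j = 0 then (a i + b 0)⁻¹ else (a i + b j)⁻¹ - (a i + b 0)⁻¹) := by
        apply my_det_col_const (fun j => if j = 0 then 0 else 1) 0 (by simp)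
        intro i j
        by_cases hj : j = 0 <;> simp [hj]
      rw [hA]
      have hB : (Matrix.of fun i j : Fin (n+1) =>
            if j = 0 then (a i + b 0)⁻¹ else (a i + b j)⁻¹ - (a i + b 0)⁻¹)
          = Matrix.of (fun i j : Fin (n+1) => (a i + b 0)⁻¹ *
              ((Matrix.of fun i j : Fin (n+1) =>
                (if j = 0 then 1 else b 0 - b j) * C1 i j) i j)) := by
        ext i j
        by_cases hj : j = 0
        · simp [hj, hC1]
        · have h1 := h i j
          have h2 := h i 0
          simp only [Matrix.of_apply, hC1, if_neg hj]
          rw [inv_sub_inv h1 h2, div_eq_mul_inv, mul_inv]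
          ring
      rw [hB, Matrix.det_mul_column, Matrix.det_mul_row]
    -- Step C+D : det C1 = (∏ e) * (∏ f) * det C3
    have stepCD : C1.det = (∏ i, (if i = 0 then 1 else a 0 - a i)) *
        ((∏ j, (if j = 0 then 1 else (a 0 + b j)⁻¹)) * C3.det) := by
      have hC : C1.det = Matrix.det (Matrix.of fun i j : Fin (n+1) =>
          if i = 0 then C1 0 j else C1 i j - C1 0 j) := by
        apply Matrix.det_eq_of_forall_row_eq_smul_add_const
          (fun i => if i = 0 then 0 else 1) 0 (by simp)
        intro i j
        by_cases hi : i = 0 <;> simp [hi]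
      rw [hC]
      have hD : (Matrix.of fun i j : Fin (n+1) =>
            if i = 0 then C1 0 j else C1 i j - C1 0 j)
          = Matrix.of (fun i j : Fin (n+1) => (if i = 0 then 1 else a 0 - a i) *
              ((Matrix.of fun i j : Fin (n+1) =>
                (if j = 0 then 1 else (a 0 + b j)⁻¹) * C3 i j) i j)) := by
        ext i j
        by_cases hi : i = 0 <;> by_cases hj : j = 0
        · simp [hC1, hC3, hi, hj]
        · simp [hC1, hC3, hi, hj]
        · simp [hC1, hC3, hi, hj]
        · have h1 := h i j
          have h2 := h 0 j
          simp only [Matrix.of_apply, hC1, hC3, if_neg hi, if_neg hj]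
          rw [inv_sub_inv h1 h2, div_eq_mul_inv, mul_inv]
          ring
      rw [hD, Matrix.det_mul_column, Matrix.det_mul_row]
    -- Step E : det C3 = det of the cauchy matrix on succ indices
    have stepE : C3.det = Matrix.det (Matrix.of fun i j : Fin n =>
        (a i.succ + b j.succ)⁻¹) := by
      rw [Matrix.det_succ_column_zero, Fin.sum_univ_succ]
      have hzero : ∀ i : Fin n, C3 i.succ 0 = 0 := by
        intro i; simp [hC3, Fin.succ_ne_zero]
      simp only [hzero, mul_zero, zero_mul, Finset.sum_const_zero, add_zero]
      have h00 : C3 0 0 = 1 := by simp [hC3]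
      rw [h00]
      have hsub : C3.submatrix (0:Fin (n+1)).succAbove Fin.succ
          = Matrix.of fun i j : Fin n => (a i.succ + b j.succ)⁻¹ := by
        ext i j
        simp [hC3, Fin.succ_ne_zero]
      rw [hsub]
      simp
    have hih := ih (fun i => a i.succ) (fun j => b j.succ) (fun i j => h _ _)
    have hd : (∏ j : Fin (n+1), if j = 0 then 1 else b 0 - b j)
        = ∏ j : Fin n, (b 0 - b j.succ) := by
      rw [Fin.prod_univ_succ]; simp [Fin.succ_ne_zero]
    have he : (∏ i : Fin (n+1), if i = 0 then 1 else a 0 - a i)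
        = ∏ i : Fin n, (a 0 - a i.succ) := by
      rw [Fin.prod_univ_succ]; simp [Fin.succ_ne_zero]
    have hf : (∏ j : Fin (n+1), if j = 0 then 1 else (a 0 + b j)⁻¹)
        = ∏ j : Fin n, (a 0 + b j.succ)⁻¹ := by
      rw [Fin.prod_univ_succ]; simp [Fin.succ_ne_zero]
    have key : (∏ i : Fin n,
          ((a i.succ - a 0) * (b i.succ - b 0) / ((a i.succ + b 0) * (a 0 + b i.succ))))
        = (∏ i : Fin n, (a i.succ + b 0)⁻¹) * ((∏ i : Fin n, (b 0 - b i.succ)) *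
            ((∏ i : Fin n, (a 0 - a i.succ)) * (∏ i : Fin n, (a 0 + b i.succ)⁻¹))) := by
      rw [← Finset.prod_mul_distrib, ← Finset.prod_mul_distrib, ← Finset.prod_mul_distrib]
      apply Finset.prod_congr rfl
      intro i _
      rw [div_eq_mul_inv, mul_inv]
      ring
    rw [stepAB, stepCD, stepE, hih, hd, he, hf]
    rw [Fin.prod_univ_succ (fun i => (a i + b 0)⁻¹),
        Fin.prod_univ_succ (fun i => (a i + b i)⁻¹),
        Fin.prod_univ_succ (fun j : Fin (n+1) => ∏ i ∈ Finset.Ioi j,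
          ((a i - a j) * (b i - b j) / ((a i + b j) * (a j + b i)))),
        Fin.prod_Ioi_zero]
    simp only [Fin.prod_Ioi_succ]
    rw [key]
    ring

/-- `Z(𝒩) = ∏_{j<i} sin²(π(m+1)(n_i−n_j)/(2m)) / sin²(π((m+1)(n_i+n_j)+1)/(2m))`. -/
noncomputable def Zprod (m : ℝ) {D : ℕ} (n : Fin D → ℕ) : ℝ :=
  ∏ i : Fin D, ∏ j ∈ Finset.univ.filter (fun j => j < i),
    Real.sin (Real.pi * (m + 1) * ((n i : ℝ) - (n j : ℝ)) / (2 * m)) ^ 2 /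
      Real.sin (Real.pi * ((m + 1) * ((n i : ℝ) + (n j : ℝ)) + 1) / (2 * m)) ^ 2

/-- For `m > 1` and strictly increasing naturals `n_1 < … < n_D` with `n_i ≤ (m−1)/2`:
all `κ_{m, n_i+n_j}` are well defined (denominators nonzero), and the matrix
`Z_{ij} = κ_{m,n_i+n_j}/κ_{m,2n_i}` has determinant equal to the strictly positive
real number `Z(𝒩)`. -/
theorem stmt10 (m : ℝ) (hm : 1 < m) (D : ℕ) (n : Fin D → ℕ) (hmono : StrictMono n)
    (hbound : ∀ i, (n i : ℝ) ≤ (m - 1) / 2) :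
    (∀ i j : Fin D, (-1 : ℂ) ^ (n i + n j) * mu m ^ (n i + n j + 1) ≠ 1) ∧
      Matrix.det (Matrix.of fun i j : Fin D => kappa m (n i + n j) / kappa m (2 * n i)) =
        ((Zprod m n : ℝ) : ℂ) ∧
      0 < Zprod m n := by
  have hm0 : (0:ℝ) < m := by linarith
  have hmne : m ≠ 0 := ne_of_gt hm0
  have hμ := mu_ne m
  have hsinB : ∀ i j : Fin D,
      Real.sin (Real.pi * ((m + 1) * ((n i:ℝ) + (n j:ℝ)) + 1) / (2 * m)) ≠ 0 :=
    fun i j => sinB_ne m hm (n i) (n j) (hbound i) (hbound j)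
  have hden : ∀ i j : Fin D, Xc m (n i) * Xc m (n j) - (mu m)⁻¹ ≠ 0 :=
    fun i j => d_ne m hmne _ _ (hsinB i j)
  -- Claim 1
  have claim1 : ∀ i j : Fin D, (-1:ℂ)^(n i + n j) * mu m^(n i + n j + 1) ≠ 1 := by
    intro i j hEq
    apply mul_ne_zero hμ (hden i j)
    have h0 : mu m * (Xc m (n i) * Xc m (n j) - (mu m)⁻¹)
        = (-1:ℂ)^(n i + n j) * mu m^(n i + n j + 1) - 1 := (denom_expand m _ _).symm
    rw [h0, hEq, sub_self]
  -- Positivity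
  have hZpos : 0 < Zprod m n := by
    rw [Zprod]
    apply Finset.prod_pos
    intro i _
    apply Finset.prod_pos
    intro j hj
    have hji : j < i := (Finset.mem_filter.mp hj).2
    have hA := sinA_ne m hm (n i) (n j) (hmono hji) (hbound i)
    exact div_pos (pow_two_pos_of_ne_zero hA) (pow_two_pos_of_ne_zero (hsinB i j))
  refine ⟨claim1, ?_, hZpos⟩
  -- determinant computation
  have hab_ne : ∀ i j : Fin D, Xc m (n i) + -(mu m)⁻¹ * (Xc m (n j))⁻¹ ≠ 0 := by
    intro i j
    rw [ab_eq]
    exact mul_ne_zero (hden i j) (inv_ne_zero (Xc_ne m (n j)))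
  have hmat : (Matrix.of fun i j : Fin D => kappa m (n i + n j) / kappa m (2 * n i))
      = Matrix.of (fun i j : Fin D => (Xc m (n i) * Xc m (n i) - (mu m)⁻¹) *
          ((Matrix.of fun i j : Fin D => (Xc m (n j))⁻¹ *
            ((Matrix.of fun i j : Fin D =>
              (Xc m (n i) + -(mu m)⁻¹ * (Xc m (n j))⁻¹)⁻¹) i j)) i j)) := by
    ext i j
    simp only [Matrix.of_apply]
    exact entry_eq m (n i) (n j) (hden i j) (hden i i)
  have hc : Matrix.det (Matrix.of fun i j : Fin D =>
        (Xc m (n i) + -(mu m)⁻¹ * (Xc m (n j))⁻¹)⁻¹)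
      = (∏ i : Fin D, (Xc m (n i) + -(mu m)⁻¹ * (Xc m (n i))⁻¹)⁻¹) *
        ∏ j : Fin D, ∏ i ∈ Finset.Ioi j,
          ((Xc m (n i) - Xc m (n j)) *
            (-(mu m)⁻¹ * (Xc m (n i))⁻¹ - -(mu m)⁻¹ * (Xc m (n j))⁻¹) /
          ((Xc m (n i) + -(mu m)⁻¹ * (Xc m (n j))⁻¹) *
            (Xc m (n j) + -(mu m)⁻¹ * (Xc m (n i))⁻¹))) :=
    my_det_cauchy D (fun i => Xc m (n i)) (fun j => -(mu m)⁻¹ * (Xc m (n j))⁻¹) hab_ne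
  rw [hmat, Matrix.det_mul_column, Matrix.det_mul_row, hc]
  -- the three diagonal products multiply to 1
  have hone : (∏ i : Fin D, (Xc m (n i) * Xc m (n i) - (mu m)⁻¹)) *
      ((∏ j : Fin D, (Xc m (n j))⁻¹) *
        (∏ i : Fin D, (Xc m (n i) + -(mu m)⁻¹ * (Xc m (n i))⁻¹)⁻¹)) = 1 := by
    rw [← Finset.prod_mul_distrib, ← Finset.prod_mul_distrib]
    apply Finset.prod_eq_one
    intro i _
    rw [ab_eq, mul_inv, inv_inv]
    have hXi := Xc_ne m (n i)
    rw [show (Xc m (n i))⁻¹ * ((Xc m (n i) * Xc m (n i) - (mu m)⁻¹)⁻¹ * Xc m (n i))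
        = (Xc m (n i) * Xc m (n i) - (mu m)⁻¹)⁻¹ * ((Xc m (n i))⁻¹ * Xc m (n i)) from by ring,
      inv_mul_cancel₀ hXi, mul_one, mul_inv_cancel₀ (hden i i)]
  -- pairs product equals the cast of the real product
  have hpairs : (∏ j : Fin D, ∏ i ∈ Finset.Ioi j,
        ((Xc m (n i) - Xc m (n j)) *
          (-(mu m)⁻¹ * (Xc m (n i))⁻¹ - -(mu m)⁻¹ * (Xc m (n j))⁻¹) /
        ((Xc m (n i) + -(mu m)⁻¹ * (Xc m (n j))⁻¹) *
          (Xc m (n j) + -(mu m)⁻¹ * (Xc m (n i))⁻¹))))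
      = ((Zprod m n : ℝ) : ℂ) := by
    have hZ : Zprod m n = ∏ j : Fin D, ∏ i ∈ Finset.Ioi j,
        (Real.sin (Real.pi * (m + 1) * ((n i : ℝ) - (n j : ℝ)) / (2 * m)) ^ 2 /
          Real.sin (Real.pi * ((m + 1) * ((n i : ℝ) + (n j : ℝ)) + 1) / (2 * m)) ^ 2) := by
      rw [Zprod]
      apply Finset.prod_comm'
      intro i j
      simp [Finset.mem_Ioi]
    rw [hZ]
    push_cast
    apply Finset.prod_congr rfl
    intro j _
    apply Finset.prod_congr rfl
    intro i _
    have := pairG_eq m hmne (n i) (n j) (hsinB i j)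
    rw [this]
    push_cast
    ring
  rw [hpairs]
  linear_combination ((Zprod m n : ℝ):ℂ) * hone
end
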